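/- arXiv:1902.08689 — 6 statements merged into one kernel-verified Lean document; each statement's English description precedes it below -/
import Mathlib

section
/- If G is a connected graph, X ⊆ V(G) has even cardinality, and H is a spanning subgraph of G with minimum number of edges subject to the condition that exactly the vertices of X have odd degree in H, then every cycle C of G has at most half of its edges in H. -/
open SimpleGraph
open scoped symmDiff

/-- The degree of `v` in `H`, defined as the cardinality of its neighbor set. -/
noncomputable def edeg {V : Type*} (H : SimpleGraph V) (v : V) : ℕ := (H.neighborSet v).ncard

/-- A factor of `G`: a spanning subgraph with all degrees at least 1. -/
def IsFactor {V : Type*} (G H : SimpleGraph V) : Prop :=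
  H ≤ G ∧ ∀ v, 1 ≤ edeg H v

/-- An `X`-parity-factor of `G`: a factor whose odd-degree vertices are exactly `X`. -/
def IsParityFactor {V : Type*} (G H : SimpleGraph V) (X : Set V) : Prop :=
  IsFactor G H ∧ ∀ v, (Odd (edeg H v) ↔ v ∈ X)

/-- `G` has the strong parity property if every even-sized vertex subset
admits an `X`-parity-factor. -/
def StrongParity {V : Type*} (G : SimpleGraph V) : Prop :=
  ∀ X : Set V, Even X.ncard → ∃ H, IsParityFactor G H X

lemma walk_countP_parity {V : Type*} [DecidableEq V] {G : SimpleGraph V} {a b : V}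
    (p : G.Walk a b) (v : V) :
    Even (p.edges.countP (fun e => decide (v ∈ e))) ↔ (v = a ↔ v = b) := by
  induction p with
  | nil => simp
  | @cons a c b h q ih =>
    rw [Walk.edges_cons, List.countP_cons]
    have hac : a ≠ c := h.ne
    by_cases hva : v = a
    · subst hva
      simp only [Sym2.mem_iff, decide_eq_true_eq, true_or, if_pos, Nat.even_add_one, ih]
      tauto
    · by_cases hvc : v = c
      · subst hvc
        simp only [Sym2.mem_iff, decide_eq_true_eq, or_true, if_pos, Nat.even_add_one, ih]
        tauto
      · have : ¬ (v ∈ s(a, c)) := by rw [Sym2.mem_iff]; tauto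
        simp only [decide_eq_true_eq]
        rw [if_neg this, add_zero, ih]
        tauto

lemma ncard_symmDiff_add {α : Type*} [Finite α] (A B : Set α) :
    (A ∆ B).ncard + 2 * (A ∩ B).ncard = A.ncard + B.ncard := by
  have h1 : (A ∆ B).ncard = (A \ B).ncard + (B \ A).ncard := by
    rw [Set.symmDiff_def]
    exact Set.ncard_union_eq disjoint_sdiff_sdiff
  have h2 := Set.ncard_inter_add_ncard_diff_eq_ncard A B
  have h3 := Set.ncard_inter_add_ncard_diff_eq_ncard B A
  rw [Set.inter_comm B A] at h3
  omega

lemma neighborSet_symmDiff {V : Type*} (A B : SimpleGraph V) (v : V) :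
    (A ∆ B).neighborSet v = (A.neighborSet v) ∆ (B.neighborSet v) := by
  ext w
  simp [symmDiff_def, Set.mem_symmDiff, mem_neighborSet]

lemma odd_edeg_symmDiff {V : Type*} [Finite V] (A B : SimpleGraph V) (v : V)
    (hB : Even (edeg B v)) : Odd (edeg (A ∆ B) v) ↔ Odd (edeg A v) := by
  have := ncard_symmDiff_add (A.neighborSet v) (B.neighborSet v)
  unfold edeg at *
  rw [neighborSet_symmDiff]
  rcases hB with ⟨k, hk⟩
  rw [Nat.odd_iff, Nat.odd_iff]
  omega

lemma ncard_mem_list {α : Type*} [DecidableEq α] (l : List α) (hl : l.Nodup) :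
    {a | a ∈ l}.ncard = l.length := by
  have : {a | a ∈ l} = (l.toFinset : Set α) := by
    ext a; simp [List.mem_toFinset]
  rw [this, Set.ncard_coe_finset, List.toFinset_card_of_nodup hl]

lemma edeg_walk_even {V : Type*} [Finite V] [DecidableEq V] {G : SimpleGraph V} {u : V}
    (C : G.Walk u u) (hC_nodup : C.edges.Nodup) (v : V) :
    Even (edeg (SimpleGraph.fromEdgeSet {e | e ∈ C.edges}) v) := by
  classical
  set K := SimpleGraph.fromEdgeSet {e | e ∈ C.edges} with hK
  have hN : K.neighborSet v = {w | s(v, w) ∈ C.edges} := by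
    ext w
    simp only [mem_neighborSet, hK, fromEdgeSet_adj, Set.mem_setOf_eq]
    exact ⟨fun h => h.1, fun h => ⟨h, (C.adj_of_mem_edges h).ne⟩⟩
  have hinj : Function.Injective (fun w => s(v, w)) := fun x y h => Sym2.congr_right.mp h
  have himg : (fun w => s(v, w)) '' {w | s(v, w) ∈ C.edges} = {e | e ∈ C.edges ∧ v ∈ e} := by
    ext e
    constructor
    · rintro ⟨w, hw, rfl⟩
      exact ⟨hw, Sym2.mem_mk_left v w⟩
    · rintro ⟨he, hv⟩
      obtain ⟨w, rfl⟩ := Sym2.mem_iff_exists.mp hv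
      exact ⟨w, he, rfl⟩
  have hF : {e | e ∈ C.edges ∧ v ∈ e} = {e | e ∈ C.edges.filter (fun e => decide (v ∈ e))} := by
    ext e; simp [List.mem_filter]
  have hcount : edeg K v = C.edges.countP (fun e => decide (v ∈ e)) := by
    unfold edeg
    rw [hN, ← Set.ncard_image_of_injective _ hinj, himg, hF,
      ncard_mem_list _ (hC_nodup.filter _), List.countP_eq_length_filter]
  rw [hcount]
  exact (walk_countP_parity C v).mpr (by tauto)

theorem min_parity_subgraph_cycle_half {V : Type*} [Fintype V] (G : SimpleGraph V)
    (hG : G.Connected) (X : Set V) (hX : Even X.ncard)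
    (H : SimpleGraph V) (hle : H ≤ G)
    (hpar : ∀ v, (Odd (edeg H v) ↔ v ∈ X))
    (hmin : ∀ H' : SimpleGraph V, H' ≤ G → (∀ v, (Odd (edeg H' v) ↔ v ∈ X)) →
      H.edgeSet.ncard ≤ H'.edgeSet.ncard)
    {u : V} (C : G.Walk u u) (hC : C.IsCycle) :
    2 * {e : Sym2 V | e ∈ C.edges ∧ e ∈ H.edgeSet}.ncard ≤ C.length := by
  classical
  have hnodup : C.edges.Nodup := hC.edges_nodup
  set K := SimpleGraph.fromEdgeSet {e | e ∈ C.edges} with hKdef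
  have hKle : K ≤ G := by
    intro a b hab
    rw [hKdef, fromEdgeSet_adj] at hab
    exact C.adj_of_mem_edges hab.1
  set H' := H ∆ K with hH'def
  have hH'le : H' ≤ G := le_trans symmDiff_le_sup (sup_le hle hKle)
  have hH'par : ∀ v, (Odd (edeg H' v) ↔ v ∈ X) := fun v => by
    rw [hH'def, odd_edeg_symmDiff H K v (edeg_walk_even C hnodup v), hpar]
  have hminH' := hmin H' hH'le hH'par
  -- edge sets
  have hEK : K.edgeSet = {e | e ∈ C.edges} := by
    rw [hKdef, edgeSet_fromEdgeSet]
    ext e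
    simp only [Set.mem_diff, Set.mem_setOf_eq, and_iff_left_iff_imp]
    exact fun he => G.not_isDiag_of_mem_edgeSet (C.edges_subset_edgeSet he)
  have hEH' : H'.edgeSet = H.edgeSet ∆ K.edgeSet := by
    rw [hH'def, symmDiff_def, edgeSet_sup, edgeSet_sdiff, edgeSet_sdiff, Set.symmDiff_def]
  have hsd := ncard_symmDiff_add H.edgeSet K.edgeSet
  have h2 := Set.ncard_inter_add_ncard_diff_eq_ncard H.edgeSet K.edgeSet
  have h3 := Set.ncard_inter_add_ncard_diff_eq_ncard K.edgeSet H.edgeSet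
  rw [Set.inter_comm K.edgeSet H.edgeSet] at h3
  rw [hEH'] at hminH'
  have htarget : {e : Sym2 V | e ∈ C.edges ∧ e ∈ H.edgeSet} = H.edgeSet ∩ K.edgeSet := by
    rw [hEK]; ext e; simp [and_comm]
  have hlen : K.edgeSet.ncard = C.length := by
    rw [hEK, ncard_mem_list _ hnodup, Walk.length_edges]
  rw [htarget]
  omega
end

section
/- If G is a connected graph with |V(G)| > 3 containing a path v1 v2 v3 with deg_G(v1) = deg_G(v2) = deg_G(v3) = 2, then G does not have the strong parity property. -/
open SimpleGraph

theorem three_degree_two_path_no_strong_parity {V : Type*} [Fintype V] (G : SimpleGraph V)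
    (hG : G.Connected) (hcard : 3 < Fintype.card V)
    (v₁ v₂ v₃ : V) (h12 : G.Adj v₁ v₂) (h23 : G.Adj v₂ v₃) (h13 : v₁ ≠ v₃)
    (hd1 : edeg G v₁ = 2) (hd2 : edeg G v₂ = 2) (hd3 : edeg G v₃ = 2) :
    ¬ StrongParity G := by
  classical
  intro hSP
  -- find a vertex outside {v₁, v₂, v₃}
  obtain ⟨w, hw1, hw2, hw3⟩ : ∃ w : V, w ≠ v₁ ∧ w ≠ v₂ ∧ w ≠ v₃ := by
    by_contra h
    push_neg at h
    have hsub : (Finset.univ : Finset V) ⊆ {v₁, v₂, v₃} := by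
      intro x _
      by_cases hx1 : x = v₁
      · simp [hx1]
      by_cases hx2 : x = v₂
      · simp [hx2]
      · simp [h x hx1 hx2]
    have hle := Finset.card_le_card hsub
    have h3 : ({v₁, v₂, v₃} : Finset V).card ≤ 3 := by
      apply le_trans (Finset.card_insert_le _ _)
      have := Finset.card_insert_le v₂ ({v₃} : Finset V)
      simp at this ⊢
      omega
    simp [Finset.card_univ] at hle
    omega
  -- the bad parity set
  set X : Set V := {v₂, w} with hX
  have hXcard : X.ncard = 2 := Set.ncard_pair (fun h => hw2 h.symm)
  obtain ⟨H, ⟨⟨hle, hmin⟩, hodd⟩⟩ := hSP X (by rw [hXcard]; exact ⟨1, rfl⟩)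
  have hsubN : ∀ v, H.neighborSet v ⊆ G.neighborSet v := fun v x hx => hle hx
  have hdle : ∀ v, edeg H v ≤ edeg G v := fun v =>
    Set.ncard_le_ncard (hsubN v) (Set.toFinite _)
  -- v₁ and v₃ are not in X, so they have even H-degree
  have key : ∀ v, v ∉ X → edeg G v = 2 → H.neighborSet v = G.neighborSet v := by
    intro v hv hdv
    have heven : Even (edeg H v) := (Nat.even_or_odd _).resolve_right
      (fun h => hv ((hodd v).mp h))
    have h1 := hmin v
    have h2 := hdle v
    rw [hdv] at h2
    have : edeg H v = 2 := by
      rcases heven with ⟨k, hk⟩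
      omega
    apply Set.eq_of_subset_of_ncard_le (hsubN v) _ (Set.toFinite _)
    rw [show (G.neighborSet v).ncard = edeg G v from rfl, hdv, ← this]
    rfl
  have hv1X : v₁ ∉ X := by
    intro h
    rcases h with h | h
    · exact G.ne_of_adj h12 h
    · exact hw1 h.symm
  have hv3X : v₃ ∉ X := by
    intro h
    rcases h with h | h
    · exact G.ne_of_adj h23 h.symm
    · exact hw3 h.symm
  have hN1 := key v₁ hv1X hd1
  have hN3 := key v₃ hv3X hd3
  -- so v₁v₂ and v₂v₃ are edges of H
  have hH12 : H.Adj v₁ v₂ := by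
    have : v₂ ∈ H.neighborSet v₁ := hN1 ▸ (by exact h12)
    exact this
  have hH23 : H.Adj v₂ v₃ := by
    have : v₂ ∈ H.neighborSet v₃ := hN3 ▸ (by exact h23.symm)
    exact this.symm
  -- hence v₂ has H-degree 2, even; contradiction with v₂ ∈ X
  have hpair : ({v₁, v₃} : Set V) ⊆ H.neighborSet v₂ := by
    intro x hx
    rcases hx with h | h
    · exact h ▸ hH12.symm
    · exact h ▸ hH23
  have h2le : 2 ≤ edeg H v₂ := by
    have := Set.ncard_le_ncard hpair (Set.toFinite _)
    rwa [Set.ncard_pair h13] at this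
  have hle2 : edeg H v₂ ≤ 2 := hd2 ▸ hdle v₂
  have hoddv2 : Odd (edeg H v₂) := (hodd v₂).mpr (Or.inl rfl)
  rcases hoddv2 with ⟨k, hk⟩
  omega
end

section
/- For every graph F, there exists a graph G containing F as an induced subgraph such that G has the strong parity property. (Hence the strong parity property admits no forbidden induced subgraph characterization.) -/
open SimpleGraph

/-! Join `F` with a triangle. Given an even set `X`, attach every vertex of `F` to one triangle
vertex `u`, and also to a second one `v` when it is not in `X`: the vertices of `F` then have degree
1 or 2 with the required parity. By the handshake lemma the remaining parity defects form an even
subset of the triangle, and a parity factor of the triangle for that subset repairs them. -/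

section edeg

variable {V W : Type*}

lemma edeg_eq_degree (H : SimpleGraph V) (v : V) [Fintype (H.neighborSet v)] :
    edeg H v = H.degree v := by
  rw [edeg, Set.ncard_eq_toFinset_card', ← card_neighborSet_eq_degree, Set.toFinset_card]

lemma even_ncard_setOf_odd_edeg [Finite V] (H : SimpleGraph V) :
    Even {v | Odd (edeg H v)}.ncard := by
  classical
  have := Fintype.ofFinite V
  simpa [edeg_eq_degree, Set.ncard_eq_toFinset_card'] using H.even_card_odd_degree_vertices

lemma edeg_sup [Finite V] {H₀ H₁ : SimpleGraph V} (h : Disjoint H₀ H₁) (v : V) :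
    edeg (H₀ ⊔ H₁) v = edeg H₀ v + edeg H₁ v := by
  rw [edeg, neighborSet_sup, Set.ncard_union_eq]
  · rfl
  · exact Set.disjoint_left.2 fun w h₀ h₁ => disjoint_left.1 h v w h₀ h₁

lemma edeg_map (f : V ↪ W) (H : SimpleGraph V) (v : V) : edeg (H.map f) (f v) = edeg H v := by
  rw [edeg, neighborSet_map, Set.ncard_map, edeg]

lemma edeg_map_of_notMem_range (f : V ↪ W) (H : SimpleGraph V) {w : W}
    (hw : w ∉ Set.range f) : edeg (H.map f) w = 0 := by
  suffices (H.map f).neighborSet w = ∅ by rw [edeg, this, Set.ncard_empty]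
  ext x
  simp only [mem_neighborSet, map_adj, Set.mem_empty_iff_false, iff_false]
  rintro ⟨v, -, -, rfl, -⟩
  exact hw ⟨v, rfl⟩

end edeg

lemma even_ncard_symmDiff {V : Type*} [Finite V] {s t : Set V} (hs : Even s.ncard)
    (ht : Even t.ncard) : Even (symmDiff s t).ncard := by
  have hunion := Set.ncard_union_add_ncard_inter s t
  have hinter : s ∩ t ⊆ s ∪ t := Set.inter_subset_left.trans Set.subset_union_left
  have hsub := Set.ncard_sdiff hinter
  have hle := Set.ncard_le_ncard hinter
  rw [symmDiff_eq_sup_sdiff_inf]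
  obtain ⟨a, ha⟩ := hs
  obtain ⟨b, hb⟩ := ht
  exact ⟨a + b - (s ∩ t).ncard, by simp only [Set.sup_eq_union, Set.inf_eq_inter]; omega⟩

lemma isParityFactor_sup {V : Type*} [Finite V] {G H₀ H₁ : SimpleGraph V} {X : Set V}
    (h₀ : H₀ ≤ G) (h₁ : H₁ ≤ G) (hdisj : Disjoint H₀ H₁) (hpos : ∀ v, 1 ≤ edeg H₀ v + edeg H₁ v)
    (hodd : ∀ v, Odd (edeg H₁ v) ↔ v ∈ symmDiff X {w | Odd (edeg H₀ w)}) :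
    IsParityFactor G (H₀ ⊔ H₁) X := by
  refine ⟨⟨sup_le h₀ h₁, fun v => edeg_sup hdisj v ▸ hpos v⟩, fun v => ?_⟩
  rw [edeg_sup hdisj, Nat.odd_add', ← Nat.not_odd_iff_even, hodd, Set.mem_symmDiff]
  simp only [Set.mem_ofPred_eq]
  tauto

lemma StrongParity.of_iso {V W : Type*} {G : SimpleGraph V} {G' : SimpleGraph W} (φ : G ≃g G')
    (hG : StrongParity G) : StrongParity G' := by
  intro X hX
  have hcard : (φ ⁻¹' X).ncard = X.ncard :=
    Set.ncard_preimage_of_injective_subset_range φ.injective (by simp [φ.surjective.range_eq])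
  obtain ⟨H, ⟨hle, hpos⟩, hodd⟩ := hG (φ ⁻¹' X) (hcard ▸ hX)
  have hdeg : ∀ w, edeg (H.map φ) w = edeg H (φ.symm w) := fun w => by
    simpa using edeg_map (φ : V ≃ W).toEmbedding H (φ.symm w)
  refine ⟨H.map φ, ⟨?_, fun w => hdeg w ▸ hpos _⟩, fun w => ?_⟩
  · rintro _ _ ⟨-, v, v', hadj, rfl, rfl⟩
    exact φ.map_adj_iff.2 (hle hadj)
  · simp [hdeg, hodd]

namespace SimpleGraph

variable {α β : Type*}

def join (F : SimpleGraph α) (K : SimpleGraph β) : SimpleGraph (α ⊕ β) where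
  Adj
    | Sum.inl a, Sum.inl a' => F.Adj a a'
    | Sum.inr b, Sum.inr b' => K.Adj b b'
    | _, _ => True
  symm.symm
    | Sum.inl _, Sum.inl _ => F.adj_symm
    | Sum.inr _, Sum.inr _ => K.adj_symm
    | Sum.inl _, Sum.inr _ | Sum.inr _, Sum.inl _ => id

def Embedding.joinInl (F : SimpleGraph α) (K : SimpleGraph β) : F ↪g join F K where
  toFun := Sum.inl
  inj' := Sum.inl_injective
  map_rel_iff' := by simp [join]

def spokes (S : Set α) (u v : β) : SimpleGraph (α ⊕ β) where
  Adj
    | Sum.inl a, Sum.inr b | Sum.inr b, Sum.inl a => b = u ∨ (b = v ∧ a ∈ S)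
    | _, _ => False
  symm.symm
    | Sum.inl _, Sum.inr _ | Sum.inr _, Sum.inl _ => id
    | Sum.inl _, Sum.inl _ | Sum.inr _, Sum.inr _ => id

lemma spokes_le_join (S : Set α) (u v : β) (F : SimpleGraph α) (K : SimpleGraph β) :
    spokes S u v ≤ join F K := by
  rintro (a | b) (a' | b') h <;> first | exact h.elim | trivial

variable {S : Set α} {u v : β}

lemma edeg_spokes_inl_of_mem (huv : u ≠ v) {a : α} (ha : a ∈ S) :
    edeg (spokes S u v) (Sum.inl a) = 2 := by
  have : (spokes S u v).neighborSet (Sum.inl a) = {Sum.inr u, Sum.inr v} := by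
    ext (a' | b) <;> simp [spokes, ha]
  rw [edeg, this, Set.ncard_pair (by simpa using huv)]

lemma edeg_spokes_inl_of_notMem {a : α} (ha : a ∉ S) :
    edeg (spokes S u v) (Sum.inl a) = 1 := by
  have : (spokes S u v).neighborSet (Sum.inl a) = {Sum.inr u} := by
    ext (a' | b) <;> simp [spokes, ha]
  rw [edeg, this, Set.ncard_singleton]

end SimpleGraph

theorem StrongParity.join {α β : Type*} [Finite α] [Finite β] {K : SimpleGraph β}
    (hK : StrongParity K) {u v : β} (huv : u ≠ v) (F : SimpleGraph α) :
    StrongParity (join F K) := by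
  intro X hX
  set H₀ := spokes {a | Sum.inl a ∉ X} u v
  have hH₀ : ∀ a, 1 ≤ edeg H₀ (Sum.inl a) ∧ (Odd (edeg H₀ (Sum.inl a)) ↔ Sum.inl a ∈ X) := by
    intro a
    by_cases ha : Sum.inl a ∈ X
    · simp [H₀, edeg_spokes_inl_of_notMem (S := {a | Sum.inl a ∉ X}) (not_not_intro ha), ha]
    · simp [H₀, edeg_spokes_inl_of_mem huv (S := {a | Sum.inl a ∉ X}) ha, ha]
  -- the vertices where `H₀` has the wrong parity; they all lie in `K`
  set D := symmDiff X {w | Odd (edeg H₀ w)}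
  have hD : D ⊆ Set.range Sum.inr := by
    rintro (a | b) h
    · simp [D, Set.mem_symmDiff, (hH₀ a).2] at h
    · exact ⟨b, rfl⟩
  have hT : Even (Sum.inr ⁻¹' D).ncard := by
    rw [Set.ncard_preimage_of_injective_subset_range Sum.inr_injective hD]
    exact even_ncard_symmDiff hX (even_ncard_setOf_odd_edeg H₀)
  obtain ⟨J, ⟨hJK, hJpos⟩, hJodd⟩ := hK _ hT
  have hJ : ∀ b, edeg (J.map Function.Embedding.inr) (Sum.inr b : α ⊕ β) = edeg J b :=
    edeg_map Function.Embedding.inr J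
  refine ⟨H₀ ⊔ J.map Function.Embedding.inr, isParityFactor_sup (spokes_le_join _ _ _ F K)
    ?_ ?_ ?_ ?_⟩
  · rintro _ _ ⟨-, b, b', h, rfl, rfl⟩
    exact hJK h
  · refine disjoint_left.2 ?_
    rintro _ _ h ⟨-, b, b', -, rfl, rfl⟩
    exact h
  · rintro (a | b)
    · exact (hH₀ a).1.trans (Nat.le_add_right _ _)
    · rw [hJ]
      exact (hJpos b).trans (Nat.le_add_left _ _)
  · rintro (a | b)
    · rw [edeg_map_of_notMem_range _ _ (by simp)]
      exact iff_of_false (by simp) fun h => by simpa using hD h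
    · rw [hJ]
      exact hJodd b

-- The witness keeps the edges with an endpoint outside `X`: for `|X| ∈ {0, 2}` the vertices of `X`
-- get degree `3 - |X| = 1` and the others degree `2`.
lemma strongParity_top_fin_three : StrongParity (⊤ : SimpleGraph (Fin 3)) := by
  have key : ∀ s : Finset (Fin 3), Even s.card → ∀ v, 1 ≤ (fromRel fun x _ => x ∉ s).degree v ∧
      (Odd ((fromRel fun x _ => x ∉ s).degree v) ↔ v ∈ s) := by
    decide
  intro X hX
  lift X to Finset (Fin 3) using X.toFinite
  rw [Set.ncard_coe_finset] at hX
  refine ⟨fromRel fun x _ => x ∉ X, ⟨le_top, fun v => ?_⟩, fun v => ?_⟩ <;>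
    rw [edeg_eq_degree]
  exacts [(key X hX v).1, (key X hX v).2]

theorem no_forbidden_induced_subgraph_characterization
    {α : Type*} [Fintype α] (F : SimpleGraph α) :
    ∃ (n : ℕ) (G : SimpleGraph (Fin n)) (_ : F ↪g G), StrongParity G := by
  let e := Fintype.equivFin (α ⊕ Fin 3)
  have hG : StrongParity (join F (⊤ : SimpleGraph (Fin 3))) :=
    strongParity_top_fin_three.join (by decide : (0 : Fin 3) ≠ 1) F
  exact ⟨_, _, (Iso.map e _).toEmbedding.comp (Embedding.joinInl F ⊤), hG.of_iso (Iso.map e _)⟩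
end

section
/- Let G be a connected multigraph with minimum degree at least 2. If G contains a connected factor F such that deg_F(v) < deg_G(v) for every vertex v, then G has the strong parity property. -/
/-!
Let `D` be the symmetric difference of `X` with the set of odd-degree vertices of `G`; by the
handshake lemma `|D|` is even. A connected graph contains a `D`-join for every even `D`, i.e. a
subgraph whose odd-degree vertices are exactly `D`: add up, modulo 2, paths from the vertices of
`D` to a fixed root. Take a `D`-join `K ≤ F`. Then `G \ K` has odd-degree set exactly `X`, and it
is a factor because `deg_K v ≤ deg_F v < deg_G v`.
-/

open SimpleGraph

open scoped symmDiff

namespace Set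

variable {α : Type*} [Finite α]

theorem ncard_symmDiff_add_two_mul_ncard_inter (s t : Set α) :
    (s ∆ t).ncard + 2 * (s ∩ t).ncard = s.ncard + t.ncard := by
  have hsub : s ∩ t ⊆ s ∪ t := inter_subset_left.trans subset_union_left
  have hdiff := ncard_sdiff hsub
  have hle := ncard_le_ncard hsub
  rw [symmDiff_eq_sup_sdiff_inf, ← ncard_union_add_ncard_inter]
  simp only [sup_eq_union, inf_eq_inter] at *
  omega

theorem even_ncard_symmDiff_iff (s t : Set α) :
    Even (s ∆ t).ncard ↔ (Even s.ncard ↔ Even t.ncard) := by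
  rw [← Nat.even_add, ← ncard_symmDiff_add_two_mul_ncard_inter]
  simp [Nat.even_add]

end Set

namespace SimpleGraph

variable {V : Type*}

theorem neighborSet_symmDiff (A B : SimpleGraph V) (v : V) :
    (A ∆ B).neighborSet v = A.neighborSet v ∆ B.neighborSet v := by
  ext
  simp [symmDiff_def]

theorem edeg_eq_degree (H : SimpleGraph V) (v : V) [Fintype (H.neighborSet v)] :
    edeg H v = H.degree v := by
  rw [edeg, ← Nat.card_coe_set_eq, Nat.card_eq_fintype_card, card_neighborSet_eq_degree]

theorem edeg_mono [Finite V] {K H : SimpleGraph V} (h : K ≤ H) (v : V) : edeg K v ≤ edeg H v :=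
  Set.ncard_le_ncard fun _ hu => h hu

theorem edeg_sdiff [Finite V] {H K : SimpleGraph V} (h : K ≤ H) (v : V) :
    edeg (H \ K) v = edeg H v - edeg K v :=
  Set.ncard_sdiff fun _ hu => h hu

def oddDegreeVerts (H : SimpleGraph V) : Set V := {v | Odd (edeg H v)}

theorem oddDegreeVerts_bot : oddDegreeVerts (⊥ : SimpleGraph V) = ∅ := by
  ext
  simp [oddDegreeVerts, edeg]

theorem oddDegreeVerts_edge (a b : V) : oddDegreeVerts (edge a b) = {a} ∆ {b} := by
  classical
  rcases eq_or_ne a b with rfl | hab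
  · simp [oddDegreeVerts_bot]
  have hN : ∀ v, (edge a b).neighborSet v = if v = a then {b} else if v = b then {a} else ∅ := by
    intro v
    ext
    simp only [mem_neighborSet, edge_adj]
    split_ifs <;> aesop
  ext v
  simp only [oddDegreeVerts, edeg, hN, Set.mem_symmDiff, Set.mem_ofPred_eq]
  split_ifs <;> simp_all

section Finite

variable [Finite V]

theorem even_ncard_oddDegreeVerts (H : SimpleGraph V) : Even (oddDegreeVerts H).ncard := by
  classical
  have := Fintype.ofFinite V
  convert H.even_card_odd_degree_vertices
  rw [← Set.ncard_coe_finset]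
  congr
  ext
  simp [oddDegreeVerts, edeg_eq_degree]

theorem oddDegreeVerts_symmDiff (A B : SimpleGraph V) :
    oddDegreeVerts (A ∆ B) = oddDegreeVerts A ∆ oddDegreeVerts B := by
  ext
  simp only [oddDegreeVerts, Set.mem_ofPred_eq, Set.mem_symmDiff, ← Nat.not_even_iff_odd, edeg,
    neighborSet_symmDiff, Set.even_ncard_symmDiff_iff]
  tauto

theorem Walk.exists_le_oddDegreeVerts_eq {G : SimpleGraph V} {a b : V} (p : G.Walk a b) :
    ∃ K ≤ G, oddDegreeVerts K = {a} ∆ {b} := by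
  induction p with
  | nil => exact ⟨⊥, bot_le, by simp [oddDegreeVerts_bot]⟩
  | cons h _ ih =>
    obtain ⟨K, hKG, hK⟩ := ih
    refine ⟨edge _ _ ∆ K, symmDiff_le_sup.trans (sup_le ((edge_le_iff G).2 (.inr h)) hKG), ?_⟩
    rw [oddDegreeVerts_symmDiff, oddDegreeVerts_edge, hK, symmDiff_assoc, symmDiff_symmDiff_cancel_left]

theorem Connected.exists_le_oddDegreeVerts_symmDiff_subset {F : SimpleGraph V}
    (hF : F.Connected) (r : V) (D : Set V) : ∃ K ≤ F, oddDegreeVerts K ∆ D ⊆ {r} := by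
  induction D, D.toFinite using Set.Finite.induction_on with
  | empty => exact ⟨⊥, bot_le, by simp [oddDegreeVerts_bot]⟩
  | @insert x D hx _ ih =>
    obtain ⟨K, hKF, hK⟩ := ih
    obtain ⟨p⟩ := hF.preconnected x r
    obtain ⟨P, hPF, hP⟩ := p.exists_le_oddDegreeVerts_eq
    refine ⟨K ∆ P, symmDiff_le_sup.trans (sup_le hKF hPF), fun v hv => ?_⟩
    rw [oddDegreeVerts_symmDiff, hP] at hv
    have hKv := @hK v
    simp only [Set.mem_symmDiff, Set.mem_insert_iff, Set.mem_singleton_iff] at hv hKv ⊢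
    by_cases hvx : v = x
    · subst hvx
      tauto
    · tauto

theorem Connected.exists_le_oddDegreeVerts_eq {F : SimpleGraph V} (hF : F.Connected)
    {D : Set V} (hD : Even D.ncard) : ∃ K ≤ F, oddDegreeVerts K = D := by
  obtain ⟨r⟩ := hF.nonempty
  obtain ⟨K, hKF, hK⟩ := hF.exists_le_oddDegreeVerts_symmDiff_subset r D
  refine ⟨K, hKF, symmDiff_eq_bot.1 ((Set.subset_singleton_iff_eq.1 hK).resolve_right ?_)⟩
  intro hKD
  have := Set.even_ncard_symmDiff_iff (oddDegreeVerts K) D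
  simp [hKD, even_ncard_oddDegreeVerts, hD] at this

end Finite

end SimpleGraph

theorem connected_factor_implies_strong_parity_general {V : Type*} [Fintype V]
    (G : SimpleGraph V)
    (F : SimpleGraph V) (hF : IsFactor G F) (hFconn : F.Connected)
    (hFdeg : ∀ v, edeg F v < edeg G v) :
    StrongParity G := by
  intro X hX
  have hD : Even (oddDegreeVerts G ∆ X).ncard := by
    rw [Set.even_ncard_symmDiff_iff]
    exact iff_of_true (even_ncard_oddDegreeVerts G) hX
  obtain ⟨K, hKF, hK⟩ := hFconn.exists_le_oddDegreeVerts_eq hD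
  have hKG : K ≤ G := hKF.trans hF.1
  refine ⟨G \ K, ⟨sdiff_le, fun v => ?_⟩, fun v => ?_⟩
  · have hKv := edeg_mono hKF v
    have hFv := hFdeg v
    rw [edeg_sdiff hKG]
    omega
  · change v ∈ oddDegreeVerts (G \ K) ↔ v ∈ X
    rw [← symmDiff_of_le hKG, oddDegreeVerts_symmDiff, hK, symmDiff_symmDiff_self']

theorem connected_factor_implies_strong_parity {V : Type*} [Fintype V]
    (G : SimpleGraph V) (hG : G.Connected) (hδ : ∀ v, 2 ≤ edeg G v)
    (F : SimpleGraph V) (hF : IsFactor G F) (hFconn : F.Connected)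
    (hFdeg : ∀ v, edeg F v < edeg G v) :
    StrongParity G :=
  connected_factor_implies_strong_parity_general G F hF hFconn hFdeg
end

section
/- If G is a 2-edge-connected graph with minimum degree at least 4, then G has the strong parity property. -/
open SimpleGraph

open Finset

open scoped Classical symmDiff

set_option linter.unusedSectionVars false

section Aux

variable {V : Type*} [Fintype V]

/-- Number of connected components. -/
noncomputable def ncc (H : SimpleGraph V) : ℕ := Nat.card H.ConnectedComponent

lemma ncc_pos [Nonempty V] (H : SimpleGraph V) : 1 ≤ ncc H := by
  haveI : Nonempty H.ConnectedComponent := ⟨H.connectedComponentMk (Classical.arbitrary V)⟩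
  exact Nat.card_pos

/-- The map between component types induced by a spanning subgraph relation. -/
noncomputable def compMap {H H' : SimpleGraph V} (h : H ≤ H') :
    H.ConnectedComponent → H'.ConnectedComponent :=
  ConnectedComponent.map (Hom.ofLE h)

lemma compMap_mk {H H' : SimpleGraph V} (h : H ≤ H') (v : V) :
    compMap h (H.connectedComponentMk v) = H'.connectedComponentMk v := rfl

lemma compMap_surjective {H H' : SimpleGraph V} (h : H ≤ H') :
    Function.Surjective (compMap h) := by
  intro c
  refine c.ind (fun v => ⟨H.connectedComponentMk v, rfl⟩)

lemma ncc_le_of_le {H H' : SimpleGraph V} (h : H ≤ H') : ncc H' ≤ ncc H :=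
  Nat.card_le_card_of_surjective _ (compMap_surjective h)

/-- Walks in `H ⊔ edge x y` decompose. -/
lemma reachable_sup_edge {H : SimpleGraph V} {x y u v : V}
    (hr : (H ⊔ edge x y).Reachable u v) :
    H.Reachable u v ∨ (H.Reachable u x ∧ H.Reachable y v) ∨
      (H.Reachable u y ∧ H.Reachable x v) := by
  obtain ⟨p⟩ := hr
  induction p with
  | nil => exact Or.inl (Reachable.refl _)
  | @cons a b c hadj p ih =>
    rw [sup_adj] at hadj
    rcases hadj with hH | he
    · rcases ih with h | ⟨h1, h2⟩ | ⟨h1, h2⟩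
      · exact Or.inl ((Adj.reachable hH).trans h)
      · exact Or.inr (Or.inl ⟨(Adj.reachable hH).trans h1, h2⟩)
      · exact Or.inr (Or.inr ⟨(Adj.reachable hH).trans h1, h2⟩)
    · rw [edge_adj] at he
      rcases he.1 with ⟨rfl,rfl⟩ | ⟨rfl,rfl⟩
      · rcases ih with h | ⟨h1, h2⟩ | ⟨h1, h2⟩
        · exact Or.inr (Or.inl ⟨Reachable.refl _, h⟩)
        · exact Or.inl (h1.symm.trans h2)
        · exact Or.inl h2
      · rcases ih with h | ⟨h1, h2⟩ | ⟨h1, h2⟩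
        · exact Or.inr (Or.inr ⟨Reachable.refl _, h⟩)
        · exact Or.inl h2
        · exact Or.inl (h1.symm.trans h2)

lemma compMap_edge_cases {H : SimpleGraph V} {x y : V}
    {c₁ c₂ : H.ConnectedComponent}
    (h : compMap (le_sup_left : H ≤ H ⊔ edge x y) c₁ =
         compMap (le_sup_left : H ≤ H ⊔ edge x y) c₂) :
    c₁ = c₂ ∨ (c₁ = H.connectedComponentMk x ∧ c₂ = H.connectedComponentMk y) ∨
      (c₁ = H.connectedComponentMk y ∧ c₂ = H.connectedComponentMk x) := by
  revert h
  refine c₁.ind fun u => c₂.ind fun v => fun h => ?_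
  rw [compMap_mk, compMap_mk, ConnectedComponent.eq] at h
  rcases reachable_sup_edge h with h | ⟨h1, h2⟩ | ⟨h1, h2⟩
  · exact Or.inl (ConnectedComponent.sound h)
  · exact Or.inr (Or.inl ⟨ConnectedComponent.sound h1, (ConnectedComponent.sound h2).symm⟩)
  · exact Or.inr (Or.inr ⟨ConnectedComponent.sound h1, (ConnectedComponent.sound h2).symm⟩)

/-- Adding an edge decreases the component count by at most 1. -/
lemma ncc_le_sup_edge_add_one (H : SimpleGraph V) (x y : V) :
    ncc H ≤ ncc (H ⊔ edge x y) + 1 := by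
  classical
  letI : Fintype H.ConnectedComponent := Fintype.ofFinite _
  letI : Fintype (H ⊔ edge x y).ConnectedComponent := Fintype.ofFinite _
  rw [ncc, ncc, Nat.card_eq_fintype_card, Nat.card_eq_fintype_card]
  have hinj : Set.InjOn (compMap (le_sup_left : H ≤ H ⊔ edge x y))
      ((Finset.univ.erase (H.connectedComponentMk y)) : Finset _) := by
    intro c₁ h₁ c₂ h₂ h
    rcases compMap_edge_cases h with h | ⟨ha, hb⟩ | ⟨ha, hb⟩
    · exact h
    · exact absurd (Finset.mem_coe.mp h₂) (by simp [hb])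
    · exact absurd (Finset.mem_coe.mp h₁) (by simp [ha])
  have h1 := Finset.card_le_card_of_injOn _ (fun c _ => Finset.mem_univ _) hinj
  have hc : (Finset.univ.erase (H.connectedComponentMk y)).card =
      Fintype.card H.ConnectedComponent - 1 := by
    rw [Finset.card_erase_of_mem (Finset.mem_univ _), Finset.card_univ]
  rw [hc, Finset.card_univ] at h1
  omega

/-- Adding an edge between vertices in the same component keeps the count. -/
lemma ncc_sup_edge_of_reachable {H : SimpleGraph V} {x y : V} (hr : H.Reachable x y) :
    ncc (H ⊔ edge x y) = ncc H := by
  have hinj : Function.Injective (compMap (le_sup_left : H ≤ H ⊔ edge x y)) := by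
    intro c₁ c₂ h
    rcases compMap_edge_cases h with h | ⟨ha, hb⟩ | ⟨ha, hb⟩
    · exact h
    · rw [ha, hb]; exact ConnectedComponent.sound hr
    · rw [ha, hb]; exact (ConnectedComponent.sound hr).symm
  exact le_antisymm
    (Nat.card_le_card_of_surjective (compMap le_sup_left) (compMap_surjective le_sup_left))
    (Nat.card_le_card_of_injective _ hinj)

/-- Adding an edge between vertices in different components drops the count. -/
lemma ncc_sup_edge_of_not_reachable {H : SimpleGraph V} {x y : V} (hxy : x ≠ y)
    (hr : ¬ H.Reachable x y) :
    ncc (H ⊔ edge x y) < ncc H := by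
  classical
  letI : Fintype H.ConnectedComponent := Fintype.ofFinite _
  letI : Fintype (H ⊔ edge x y).ConnectedComponent := Fintype.ofFinite _
  rw [ncc, ncc, Nat.card_eq_fintype_card, Nat.card_eq_fintype_card]
  refine Fintype.card_lt_of_surjective_not_injective
      (compMap (le_sup_left : H ≤ H ⊔ edge x y)) (compMap_surjective _) ?_
  intro hinj
  apply hr
  have hre : (H ⊔ edge x y).Reachable x y := Adj.reachable (by
    rw [sup_adj, edge_adj]; exact Or.inr ⟨Or.inl ⟨rfl, rfl⟩, hxy⟩)
  have h2 := hinj (show compMap (le_sup_left : H ≤ H ⊔ edge x y) (H.connectedComponentMk x) =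
      compMap le_sup_left (H.connectedComponentMk y) from
    (by rw [compMap_mk, compMap_mk]; exact ConnectedComponent.sound hre))
  exact ConnectedComponent.exact h2
/-- The spanning subgraph of `G` keeping the edges in `A`. -/
noncomputable def KG (G : SimpleGraph V) (A : Finset (Sym2 V)) : SimpleGraph V :=
  fromEdgeSet (↑A ∩ G.edgeSet)

lemma KG_mono (G : SimpleGraph V) {A B : Finset (Sym2 V)} (h : A ⊆ B) :
    KG G A ≤ KG G B :=
  fromEdgeSet_mono (Set.inter_subset_inter_left _ (by exact_mod_cast h))

lemma KG_le (G : SimpleGraph V) (A : Finset (Sym2 V)) : KG G A ≤ G := by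
  intro a b hab
  rw [KG, fromEdgeSet_adj] at hab
  exact hab.1.2

lemma KG_insert_eq (G : SimpleGraph V) (A : Finset (Sym2 V)) {x y : V}
    (he : s(x, y) ∈ G.edgeSet) :
    KG G (insert s(x, y) A) = KG G A ⊔ edge x y := by
  have hxy : x ≠ y := G.ne_of_adj he
  ext a b
  rw [KG, KG, fromEdgeSet_adj, sup_adj, fromEdgeSet_adj, edge_adj]
  constructor
  · rintro ⟨⟨h1, h2⟩, hne⟩
    rcases Finset.mem_insert.mp (by exact_mod_cast h1) with h | h
    · rw [Sym2.eq_iff] at h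
      exact Or.inr ⟨h, hne⟩
    · exact Or.inl ⟨⟨by exact_mod_cast h, h2⟩, hne⟩
  · rintro (⟨⟨h1, h2⟩, hne⟩ | ⟨h, hne⟩)
    · exact ⟨⟨by simp [Finset.mem_insert]; tauto, h2⟩, hne⟩
    · have : s(a, b) = s(x, y) := Sym2.eq_iff.mpr h
      refine ⟨⟨by simp [this], by rwa [this]⟩, hne⟩

lemma ncc_KG_insert_le (G : SimpleGraph V) (A : Finset (Sym2 V)) {e : Sym2 V}
    (he : e ∈ G.edgeSet) :
    ncc (KG G A) ≤ ncc (KG G (insert e A)) + 1 := by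
  induction e using Sym2.ind with
  | _ x y => rw [KG_insert_eq G A he]; exact ncc_le_sup_edge_add_one _ x y

lemma ncc_KG_insert_mono (G : SimpleGraph V) (A : Finset (Sym2 V)) (e : Sym2 V) :
    ncc (KG G (insert e A)) ≤ ncc (KG G A) :=
  ncc_le_of_le (KG_mono G (Finset.subset_insert _ _))

/-- Diminishing returns: single-edge submodularity. -/
lemma ncc_KG_insert_exchange (G : SimpleGraph V) {A B : Finset (Sym2 V)} (hAB : A ⊆ B)
    {e : Sym2 V} (he : e ∈ G.edgeSet) :
    ncc (KG G (insert e A)) + ncc (KG G B) ≤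
      ncc (KG G (insert e B)) + ncc (KG G A) := by
  induction e using Sym2.ind with
  | _ x y =>
    have hxy : x ≠ y := G.ne_of_adj he
    by_cases hreach : (KG G A).Reachable x y
    · have h1 : ncc (KG G (insert s(x, y) A)) = ncc (KG G A) := by
        rw [KG_insert_eq G A he]; exact ncc_sup_edge_of_reachable hreach
      have h2 : ncc (KG G (insert s(x, y) B)) = ncc (KG G B) := by
        rw [KG_insert_eq G B he]
        exact ncc_sup_edge_of_reachable (hreach.mono (KG_mono G hAB))
      omega
    · have h1 : ncc (KG G (insert s(x, y) A)) < ncc (KG G A) := by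
        rw [KG_insert_eq G A he]; exact ncc_sup_edge_of_not_reachable hxy hreach
      have h2 : ncc (KG G B) ≤ ncc (KG G (insert s(x, y) B)) + 1 :=
        ncc_KG_insert_le G B he
      omega

/-- Iterated exchange. -/
lemma ncc_KG_union_exchange (G : SimpleGraph V) (U : Finset (Sym2 V))
    (hU : ↑U ⊆ G.edgeSet) :
    ∀ A B : Finset (Sym2 V), A ⊆ B →
      ncc (KG G (A ∪ U)) + ncc (KG G B) ≤ ncc (KG G (B ∪ U)) + ncc (KG G A) := by
  induction U using Finset.induction with
  | empty => intro A B h; simp [Nat.add_comm]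
  | @insert e U heU ih =>
    intro A B hAB
    have he : e ∈ G.edgeSet := hU (Finset.mem_insert_self e U)
    have hU' : ↑U ⊆ G.edgeSet := fun f hf => hU (by
      simp only [Finset.coe_insert, Set.mem_insert_iff]; exact Or.inr hf)
    have key := ncc_KG_insert_exchange G
      (Finset.union_subset_union hAB (Finset.Subset.refl U)) he
    have ih' := ih hU' A B hAB
    have e1 : A ∪ insert e U = insert e (A ∪ U) := by ext x; simp; try tauto
    have e2 : B ∪ insert e U = insert e (B ∪ U) := by ext x; simp; try tauto
    rw [e1, e2]
    omega

/-- Submodularity of the component count. -/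
lemma ncc_KG_submod (G : SimpleGraph V) (S T : Finset (Sym2 V))
    (hT : ↑T ⊆ G.edgeSet) :
    ncc (KG G S) + ncc (KG G T) ≤ ncc (KG G (S ∩ T)) + ncc (KG G (S ∪ T)) := by
  have h := ncc_KG_union_exchange G (T \ S)
    (fun f hf => hT (by
      have : f ∈ T \ S := hf
      exact Finset.mem_coe.mpr (Finset.mem_sdiff.mp this).1))
    (S ∩ T) S Finset.inter_subset_left
  have e1 : S ∩ T ∪ T \ S = T := by ext x; simp; try tauto
  have e2 : S ∪ T \ S = S ∪ T := by ext x; simp; try tauto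
  rw [e1, e2] at h
  omega
lemma ncc_eq_one_of_connected {H : SimpleGraph V} (h : H.Connected) : ncc H = 1 := by
  haveI : Nonempty V := h.nonempty
  rw [ncc, Nat.card_eq_one_iff_unique]
  constructor
  · constructor
    intro c d
    refine c.ind fun u => d.ind fun v => ?_
    exact ConnectedComponent.sound (h.preconnected u v)
  · exact ⟨H.connectedComponentMk (Classical.arbitrary V)⟩

lemma connected_of_ncc_eq_one {H : SimpleGraph V} (hne : Nonempty V) (h : ncc H = 1) :
    H.Connected := by
  rw [SimpleGraph.connected_iff]
  refine ⟨?_, hne⟩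
  intro u v
  have hs : Subsingleton H.ConnectedComponent := by
    rw [ncc, Nat.card_eq_one_iff_unique] at h
    exact h.1
  exact ConnectedComponent.exact (Subsingleton.elim _ _)

lemma ncc_KG_le_union (G : SimpleGraph V) (A : Finset (Sym2 V)) (D : Finset (Sym2 V))
    (hD : ↑D ⊆ G.edgeSet) :
    ncc (KG G A) ≤ ncc (KG G (A ∪ D)) + D.card := by
  induction D using Finset.induction with
  | empty => simp
  | @insert e D heD ih =>
    have he : e ∈ G.edgeSet := hD (Finset.mem_insert_self e D)
    have hD' : ↑D ⊆ G.edgeSet := fun f hf => hD (by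
      simp only [Finset.coe_insert, Set.mem_insert_iff]; exact Or.inr hf)
    have h1 := ih hD'
    have h2 : ncc (KG G (A ∪ D)) ≤ ncc (KG G (insert e (A ∪ D))) + 1 :=
      ncc_KG_insert_le G _ he
    have e1 : A ∪ insert e D = insert e (A ∪ D) := by ext z; simp; try tauto
    rw [e1, Finset.card_insert_of_notMem heD]
    omega

/-- The "corank" function: the rank of `A` in the bond matroid of `G`. -/
noncomputable def rstar (G : SimpleGraph V) (A : Finset (Sym2 V)) : ℤ :=
  (A.card : ℤ) + 1 - ncc (KG G (G.edgeFinset \ A))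

lemma rstar_le_card (G : SimpleGraph V) [Nonempty V] (A : Finset (Sym2 V)) :
    rstar G A ≤ A.card := by
  have := ncc_pos (KG G (G.edgeFinset \ A))
  rw [rstar]
  omega

lemma rstar_mono (G : SimpleGraph V) {A B : Finset (Sym2 V)} (hAB : A ⊆ B)
    (hB : B ⊆ G.edgeFinset) :
    rstar G A ≤ rstar G B := by
  set E := G.edgeFinset with hE
  have hsub : E \ B ⊆ E \ A := Finset.sdiff_subset_sdiff (Finset.Subset.refl E) hAB
  have key := ncc_KG_le_union G (E \ B) ((E \ A) \ (E \ B)) (by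
    intro f hf
    have : f ∈ (E \ A) \ (E \ B) := hf
    have := (Finset.mem_sdiff.mp this).1
    exact mem_edgeFinset.mp (Finset.mem_sdiff.mp this).1)
  have e1 : E \ B ∪ (E \ A) \ (E \ B) = E \ A := by
    ext z; simp; tauto
  rw [e1] at key
  have hcard : ((E \ A) \ (E \ B)).card ≤ B.card - A.card := by
    have hsub2 : (E \ A) \ (E \ B) ⊆ B \ A := by
      intro z hz
      simp only [Finset.mem_sdiff] at hz ⊢
      tauto
    have := Finset.card_le_card hsub2
    rw [Finset.card_sdiff_of_subset hAB] at this
    exact this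
  have hABcard : A.card ≤ B.card := Finset.card_le_card hAB
  rw [rstar, rstar]
  simp only [← hE]
  have hcard' : ((E \ A) \ (E \ B)).card + A.card ≤ B.card := by omega
  push_cast
  have : (ncc (KG G (E \ B)) : ℤ) ≤ ncc (KG G (E \ A)) + ((E \ A) \ (E \ B)).card := by
    exact_mod_cast key
  omega

lemma rstar_submod (G : SimpleGraph V) {A B : Finset (Sym2 V)}
    (hA : A ⊆ G.edgeFinset) (hB : B ⊆ G.edgeFinset) :
    rstar G (A ∪ B) + rstar G (A ∩ B) ≤ rstar G A + rstar G B := by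
  have hsm := ncc_KG_submod G (G.edgeFinset \ A) (G.edgeFinset \ B) (by
    intro f hf
    have : f ∈ G.edgeFinset \ B := hf
    exact mem_edgeFinset.mp (Finset.mem_sdiff.mp this).1)
  have e1 : (G.edgeFinset \ A) ∩ (G.edgeFinset \ B) = G.edgeFinset \ (A ∪ B) := by
    ext z; simp; tauto
  have e2 : (G.edgeFinset \ A) ∪ (G.edgeFinset \ B) = G.edgeFinset \ (A ∩ B) := by
    ext z; simp; tauto
  rw [e1, e2] at hsm
  have hcards : (A ∪ B).card + (A ∩ B).card = A.card + B.card :=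
    Finset.card_union_add_card_inter A B
  rw [rstar, rstar, rstar, rstar]
  have hz : (ncc (KG G (G.edgeFinset \ A)) : ℤ) + ncc (KG G (G.edgeFinset \ B)) ≤
      ncc (KG G (G.edgeFinset \ (A ∪ B))) + ncc (KG G (G.edgeFinset \ (A ∩ B))) := by
    exact_mod_cast hsm
  have hc : ((A ∪ B).card : ℤ) + (A ∩ B).card = A.card + B.card := by exact_mod_cast hcards
  omega

lemma KG_sdiff_eq_deleteEdges (G : SimpleGraph V) (M : Finset (Sym2 V)) :
    KG G (G.edgeFinset \ M) = G.deleteEdges ↑M := by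
  ext a b
  rw [KG, fromEdgeSet_adj, deleteEdges_adj]
  constructor
  · rintro ⟨⟨h1, h2⟩, hne⟩
    have := Finset.mem_sdiff.mp (by exact_mod_cast h1)
    exact ⟨h2, fun hc => this.2 (Finset.mem_coe.mp hc)⟩
  · rintro ⟨h1, h2⟩
    refine ⟨⟨?_, h1⟩, G.ne_of_adj h1⟩
    have : s(a, b) ∈ G.edgeFinset \ M :=
      Finset.mem_sdiff.mpr ⟨mem_edgeFinset.mpr h1, fun hc => h2 (Finset.mem_coe.mpr hc)⟩
    exact_mod_cast this

/-- Rado's theorem for the bond matroid of `G`. -/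
lemma rado (G : SimpleGraph V) (hG : G.Connected)
    (𝒜 : V → Finset (Sym2 V)) (hA : ∀ v, 𝒜 v ⊆ G.edgeFinset)
    (cond : ∀ W : Finset V, (W.card : ℤ) ≤ rstar G (W.biUnion 𝒜)) :
    ∃ m : V → Sym2 V, (∀ v, m v ∈ 𝒜 v) ∧
      (G.deleteEdges ↑(Finset.univ.image m)).Connected := by
  classical
  haveI : Nonempty V := hG.nonempty
  obtain ⟨N, hN⟩ : ∃ N, ∑ v, (𝒜 v).card ≤ N := ⟨_, le_refl _⟩
  induction N generalizing 𝒜 with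
  | zero =>
    exfalso
    obtain ⟨v⟩ := ‹Nonempty V›
    have h1 := cond {v}
    rw [Finset.singleton_biUnion, Finset.card_singleton] at h1
    have h2 := rstar_le_card G (𝒜 v)
    have h3 : (𝒜 v).card = 0 := by
      have h4 : (𝒜 v).card ≤ ∑ w, (𝒜 w).card :=
        Finset.single_le_sum (f := fun w => (𝒜 w).card) (fun i _ => Nat.zero_le _)
          (Finset.mem_univ v)
      omega
    rw [h3] at h2
    omega
  | succ N ih =>
    by_cases hsing : ∀ v, (𝒜 v).card ≤ 1
    · -- base case: all singletons
      have hne : ∀ v, (𝒜 v).Nonempty := by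
        intro v
        rw [← Finset.card_pos]
        have h1 := cond {v}
        rw [Finset.singleton_biUnion, Finset.card_singleton] at h1
        have h2 := rstar_le_card G (𝒜 v)
        omega
      choose m hm using hne
      refine ⟨m, hm, ?_⟩
      have hAv : ∀ v, 𝒜 v = {m v} := by
        intro v
        apply Finset.eq_singleton_iff_unique_mem.mpr
        refine ⟨hm v, fun e he => ?_⟩
        have := Finset.card_le_one.mp (hsing v) e he (m v) (hm v)
        exact this
      set M := Finset.univ.image m with hM
      have hMeq : Finset.univ.biUnion 𝒜 = M := by
        ext e
        constructor
        · intro he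
          obtain ⟨v, _, hv⟩ := Finset.mem_biUnion.mp he
          rw [hAv v, Finset.mem_singleton] at hv
          exact Finset.mem_image.mpr ⟨v, Finset.mem_univ v, hv.symm⟩
        · intro he
          obtain ⟨v, _, hv⟩ := Finset.mem_image.mp he
          refine Finset.mem_biUnion.mpr ⟨v, Finset.mem_univ v, ?_⟩
          rw [hAv v]
          exact Finset.mem_singleton.mpr hv.symm
      have hcond := cond Finset.univ
      rw [hMeq] at hcond
      have hMcard : M.card ≤ Fintype.card V := by
        rw [hM]
        exact le_trans (Finset.card_image_le) (by rw [Finset.card_univ])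
      rw [rstar] at hcond
      have hpos := ncc_pos (KG G (G.edgeFinset \ M))
      have hcardV : (Finset.univ : Finset V).card = Fintype.card V := Finset.card_univ
      rw [hcardV] at hcond
      have hone : ncc (KG G (G.edgeFinset \ M)) = 1 := by
        have : (ncc (KG G (G.edgeFinset \ M)) : ℤ) ≤ M.card + 1 - Fintype.card V := by omega
        have h5 : (M.card : ℤ) ≤ Fintype.card V := by exact_mod_cast hMcard
        omega
      rw [KG_sdiff_eq_deleteEdges] at hone
      exact connected_of_ncc_eq_one ‹Nonempty V› hone
    · -- reduction step
      push_neg at hsing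
      obtain ⟨v₀, hv₀⟩ := hsing
      obtain ⟨x, hx, y, hy, hxy⟩ := Finset.one_lt_card.mp hv₀
      -- the two candidate reduced families
      have main : ∀ z ∈ 𝒜 v₀, ∀ w ∈ 𝒜 v₀, z ≠ w →
          (¬ ∀ W : Finset V, (W.card : ℤ) ≤
            rstar G (W.biUnion (Function.update 𝒜 v₀ ((𝒜 v₀).erase z)))) →
          (∃ W : Finset V, v₀ ∈ W ∧
            (rstar G (W.biUnion (Function.update 𝒜 v₀ ((𝒜 v₀).erase z))) ≤ (W.card : ℤ) - 1)) := by
        intro z hz w hw hzw hfail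
        push_neg at hfail
        obtain ⟨W, hW⟩ := hfail
        refine ⟨W, ?_, by omega⟩
        by_contra hv₀W
        apply absurd (cond W)
        have : W.biUnion (Function.update 𝒜 v₀ ((𝒜 v₀).erase z)) = W.biUnion 𝒜 := by
          apply Finset.biUnion_congr rfl
          intro u hu
          rw [Function.update_of_ne (fun h => hv₀W (by rw [← h]; exact hu))]
        rw [← this]
        omega
      by_cases hcx : ∀ W : Finset V, (W.card : ℤ) ≤
          rstar G (W.biUnion (Function.update 𝒜 v₀ ((𝒜 v₀).erase x)))
      · -- recurse with Ax
        have hA' : ∀ v, Function.update 𝒜 v₀ ((𝒜 v₀).erase x) v ⊆ G.edgeFinset := by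
          intro v
          by_cases h : v = v₀
          · subst h; rw [Function.update_self]
            exact le_trans (Finset.erase_subset _ _) (hA v)
          · rw [Function.update_of_ne h]; exact hA v
        have hsum : ∑ v, (Function.update 𝒜 v₀ ((𝒜 v₀).erase x) v).card ≤ N := by
          have key : ∑ v, (Function.update 𝒜 v₀ ((𝒜 v₀).erase x) v).card
              = ∑ v ∈ Finset.univ.erase v₀, (𝒜 v).card + ((𝒜 v₀).erase x).card := by
            rw [← Finset.sum_erase_add _ _ (Finset.mem_univ v₀)]
            congr 1
            · exact Finset.sum_congr rfl (fun u hu => by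
                rw [Function.update_of_ne (Finset.ne_of_mem_erase hu)])
            · rw [Function.update_self]
          have key2 : ∑ v ∈ Finset.univ.erase v₀, (𝒜 v).card + (𝒜 v₀).card
              = ∑ v, (𝒜 v).card :=
            Finset.sum_erase_add _ _ (Finset.mem_univ v₀)
          have hce : ((𝒜 v₀).erase x).card = (𝒜 v₀).card - 1 :=
            Finset.card_erase_of_mem hx
          omega
        obtain ⟨m, hm1, hm2⟩ := ih _ hA' hcx hsum
        refine ⟨m, fun v => ?_, hm2⟩
        have := hm1 v
        by_cases h : v = v₀
        · subst h; rw [Function.update_self] at this; exact (Finset.erase_subset _ _) this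
        · rwa [Function.update_of_ne h] at this
      · by_cases hcy : ∀ W : Finset V, (W.card : ℤ) ≤
            rstar G (W.biUnion (Function.update 𝒜 v₀ ((𝒜 v₀).erase y)))
        · -- recurse with Ay (same as above)
          have hA' : ∀ v, Function.update 𝒜 v₀ ((𝒜 v₀).erase y) v ⊆ G.edgeFinset := by
            intro v
            by_cases h : v = v₀
            · subst h; rw [Function.update_self]
              exact le_trans (Finset.erase_subset _ _) (hA v)
            · rw [Function.update_of_ne h]; exact hA v
          have hsum : ∑ v, (Function.update 𝒜 v₀ ((𝒜 v₀).erase y) v).card ≤ N := by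
            have key : ∑ v, (Function.update 𝒜 v₀ ((𝒜 v₀).erase y) v).card
                = ∑ v ∈ Finset.univ.erase v₀, (𝒜 v).card + ((𝒜 v₀).erase y).card := by
              rw [← Finset.sum_erase_add _ _ (Finset.mem_univ v₀)]
              congr 1
              · exact Finset.sum_congr rfl (fun u hu => by
                  rw [Function.update_of_ne (Finset.ne_of_mem_erase hu)])
              · rw [Function.update_self]
            have key2 : ∑ v ∈ Finset.univ.erase v₀, (𝒜 v).card + (𝒜 v₀).card
                = ∑ v, (𝒜 v).card :=
              Finset.sum_erase_add _ _ (Finset.mem_univ v₀)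
            have hce : ((𝒜 v₀).erase y).card = (𝒜 v₀).card - 1 :=
              Finset.card_erase_of_mem hy
            omega
          obtain ⟨m, hm1, hm2⟩ := ih _ hA' hcy hsum
          refine ⟨m, fun v => ?_, hm2⟩
          have := hm1 v
          by_cases h : v = v₀
          · subst h; rw [Function.update_self] at this; exact (Finset.erase_subset _ _) this
          · rwa [Function.update_of_ne h] at this
        · -- both fail: contradiction
          exfalso
          obtain ⟨W₁, hW₁v, hW₁⟩ := main x hx y hy hxy hcx
          obtain ⟨W₂, hW₂v, hW₂⟩ := main y hy x hx hxy.symm hcy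
          set Ax := Function.update 𝒜 v₀ ((𝒜 v₀).erase x) with hAxdef
          set Ay := Function.update 𝒜 v₀ ((𝒜 v₀).erase y) with hAydef
          set B₁ := W₁.biUnion Ax with hB₁
          set B₂ := W₂.biUnion Ay with hB₂
          have hB₁E : B₁ ⊆ G.edgeFinset := by
            intro e he
            obtain ⟨u, hu, heu⟩ := Finset.mem_biUnion.mp he
            by_cases h : u = v₀
            · subst h; rw [hAxdef, Function.update_self] at heu
              exact hA u ((Finset.erase_subset _ _) heu)
            · rw [hAxdef, Function.update_of_ne h] at heu; exact hA u heu
          have hB₂E : B₂ ⊆ G.edgeFinset := by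
            intro e he
            obtain ⟨u, hu, heu⟩ := Finset.mem_biUnion.mp he
            by_cases h : u = v₀
            · subst h; rw [hAydef, Function.update_self] at heu
              exact hA u ((Finset.erase_subset _ _) heu)
            · rw [hAydef, Function.update_of_ne h] at heu; exact hA u heu
          have claim1 : (W₁ ∪ W₂).biUnion 𝒜 ⊆ B₁ ∪ B₂ := by
            intro e he
            obtain ⟨u, hu, heu⟩ := Finset.mem_biUnion.mp he
            rw [Finset.mem_union] at hu
            by_cases h : u = v₀
            · subst h
              by_cases hex : e = x
              · subst hex
                refine Finset.mem_union_right _ (Finset.mem_biUnion.mpr ⟨u, hW₂v, ?_⟩)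
                rw [hAydef, Function.update_self]
                exact Finset.mem_erase.mpr ⟨hxy, heu⟩
              · refine Finset.mem_union_left _ (Finset.mem_biUnion.mpr ⟨u, hW₁v, ?_⟩)
                rw [hAxdef, Function.update_self]
                exact Finset.mem_erase.mpr ⟨hex, heu⟩
            · rcases hu with hu | hu
              · refine Finset.mem_union_left _ (Finset.mem_biUnion.mpr ⟨u, hu, ?_⟩)
                rw [hAxdef, Function.update_of_ne h]; exact heu
              · refine Finset.mem_union_right _ (Finset.mem_biUnion.mpr ⟨u, hu, ?_⟩)
                rw [hAydef, Function.update_of_ne h]; exact heu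
          have claim2 : ((W₁ ∩ W₂).erase v₀).biUnion 𝒜 ⊆ B₁ ∩ B₂ := by
            intro e he
            obtain ⟨u, hu, heu⟩ := Finset.mem_biUnion.mp he
            obtain ⟨huv₀, hu12⟩ := Finset.mem_erase.mp hu
            rw [Finset.mem_inter] at hu12
            refine Finset.mem_inter.mpr ⟨Finset.mem_biUnion.mpr ⟨u, hu12.1, ?_⟩,
              Finset.mem_biUnion.mpr ⟨u, hu12.2, ?_⟩⟩
            · rw [hAxdef, Function.update_of_ne huv₀]; exact heu
            · rw [hAydef, Function.update_of_ne huv₀]; exact heu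
          have hsm := rstar_submod G hB₁E hB₂E
          have hm1 : rstar G ((W₁ ∪ W₂).biUnion 𝒜) ≤ rstar G (B₁ ∪ B₂) :=
            rstar_mono G claim1 (Finset.union_subset hB₁E hB₂E)
          have hm2 : rstar G (((W₁ ∩ W₂).erase v₀).biUnion 𝒜) ≤ rstar G (B₁ ∩ B₂) :=
            rstar_mono G claim2 (le_trans Finset.inter_subset_left hB₁E)
          have hc1 := cond (W₁ ∪ W₂)
          have hc2 := cond ((W₁ ∩ W₂).erase v₀)
          have hcard1 : (W₁ ∪ W₂).card + (W₁ ∩ W₂).card = W₁.card + W₂.card :=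
            Finset.card_union_add_card_inter W₁ W₂
          have hcard2 : ((W₁ ∩ W₂).erase v₀).card = (W₁ ∩ W₂).card - 1 :=
            Finset.card_erase_of_mem (Finset.mem_inter.mpr ⟨hW₁v, hW₂v⟩)
          have hpos : 1 ≤ (W₁ ∩ W₂).card :=
            Finset.card_pos.mpr ⟨v₀, Finset.mem_inter.mpr ⟨hW₁v, hW₂v⟩⟩
          have hcast1 : ((W₁ ∪ W₂).card : ℤ) + (W₁ ∩ W₂).card = W₁.card + W₂.card := by
            exact_mod_cast hcard1
          have hcast2 : (((W₁ ∩ W₂).erase v₀).card : ℤ) = (W₁ ∩ W₂).card - 1 := by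
            rw [hcard2]; push_cast [hpos]; omega
          omega
/-- Edge-multiset degree of a vertex w.r.t. a finite edge set. -/
noncomputable def degF (A : Finset (Sym2 V)) (v : V) : ℕ :=
  (A.filter (fun e => v ∈ e)).card

lemma edeg_eq_degree_s8 (G : SimpleGraph V) (v : V) :
    edeg G v = G.degree v := by
  classical
  rw [edeg, degree, neighborFinset_def, Set.ncard_eq_toFinset_card']

lemma degF_edgeFinset (G : SimpleGraph V) (v : V) :
    degF (G.edgeFinset) v = edeg G v := by
  classical
  rw [degF, edeg_eq_degree_s8, ← card_incidenceFinset_eq_degree, incidenceFinset_eq_filter]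

lemma two_mem_sym2 (G : SimpleGraph V) {e : Sym2 V} (he : e ∈ G.edgeSet) :
    (Finset.univ.filter (fun v => v ∈ e)).card = 2 := by
  classical
  induction e using Sym2.ind with
  | _ a b =>
    have hab : a ≠ b := G.ne_of_adj he
    have : (Finset.univ.filter (fun v => v ∈ s(a, b))) = {a, b} := by
      ext z
      simp [Sym2.mem_iff]
    rw [this, Finset.card_insert_of_notMem (by simpa using hab), Finset.card_singleton]

/-- Handshake for edge sets. -/
lemma sum_degF (G : SimpleGraph V) (A : Finset (Sym2 V)) (hA : A ⊆ G.edgeFinset) :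
    ∑ v, degF A v = 2 * A.card := by
  classical
  unfold degF
  have h1 : ∀ v : V, (A.filter (fun e => v ∈ e)).card = ∑ e ∈ A, if v ∈ e then 1 else 0 := by
    intro v; rw [Finset.card_filter]
  simp_rw [h1]
  rw [Finset.sum_comm]
  have h2 : ∀ e ∈ A, (∑ v : V, if v ∈ e then 1 else 0) = 2 := by
    intro e he
    rw [← Finset.card_filter]
    exact two_mem_sym2 G (mem_edgeFinset.mp (hA he))
  rw [Finset.sum_congr rfl h2, Finset.sum_const, smul_eq_mul, mul_comm]

lemma exists_cross_adj {H : SimpleGraph V} {S : Set V} {u v : V} (hu : u ∈ S) (hv : v ∉ S)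
    (p : H.Walk u v) : ∃ a b, H.Adj a b ∧ a ∈ S ∧ b ∉ S := by
  revert hu
  induction p with
  | nil => intro hu; exact absurd hu hv
  | @cons a b c hadj p ih =>
    intro hu
    by_cases hb : b ∈ S
    · exact ih hv hb
    · exact ⟨a, b, hadj, hu, hb⟩

/-- In a 2-edge-connected graph, every nontrivial cut has at least two crossing edges. -/
lemma two_crossing_edges (G : SimpleGraph V) (hG : G.Connected)
    (hbridgeless : ∀ e ∈ G.edgeSet, (G.deleteEdges {e}).Connected)
    {S : Set V} {u₀ v₀ : V} (hu₀ : u₀ ∈ S) (hv₀ : v₀ ∉ S) :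
    ∃ e₁ ∈ G.edgeFinset, ∃ e₂ ∈ G.edgeFinset, e₁ ≠ e₂ ∧
      (∃ a b, e₁ = s(a, b) ∧ a ∈ S ∧ b ∉ S) ∧ (∃ a b, e₂ = s(a, b) ∧ a ∈ S ∧ b ∉ S) := by
  classical
  obtain ⟨a₁, b₁, hadj₁, ha₁, hb₁⟩ := exists_cross_adj hu₀ hv₀ (hG.preconnected u₀ v₀).some
  set e₁ := s(a₁, b₁) with he₁
  have he₁set : e₁ ∈ G.edgeSet := hadj₁
  obtain ⟨a₂, b₂, hadj₂, ha₂, hb₂⟩ := exists_cross_adj hu₀ hv₀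
    (((hbridgeless e₁ he₁set).preconnected u₀ v₀)).some
  rw [deleteEdges_adj] at hadj₂
  refine ⟨e₁, mem_edgeFinset.mpr he₁set, s(a₂, b₂), mem_edgeFinset.mpr hadj₂.1, ?_,
    ⟨a₁, b₁, rfl, ha₁, hb₁⟩, ⟨a₂, b₂, rfl, ha₂, hb₂⟩⟩
  intro hcontr
  exact hadj₂.2 (by rw [← hcontr]; exact Set.mem_singleton _)
lemma KG_edgeFinset (G : SimpleGraph V) : KG G G.edgeFinset = G := by
  rw [KG, coe_edgeFinset, Set.inter_self, fromEdgeSet_edgeSet]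

lemma reach_isolated {H : SimpleGraph V} {w : V} (hiso : ∀ z, ¬ H.Adj w z) {v : V}
    (h : H.Reachable v w) : v = w := by
  obtain ⟨p⟩ := h.symm
  cases p with
  | nil => rfl
  | cons hadj _ => exact absurd hadj (hiso _)

lemma cond_check (G : SimpleGraph V) (hG : G.Connected)
    (hbridgeless : ∀ e ∈ G.edgeSet, (G.deleteEdges {e}).Connected)
    (hδ : ∀ v, 4 ≤ edeg G v) (W : Finset V) :
    (W.card : ℤ) ≤ rstar G (W.biUnion (fun v => G.edgeFinset.filter (fun e => v ∈ e))) := by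
  classical
  haveI : Nonempty V := hG.nonempty
  set 𝒜 : V → Finset (Sym2 V) := fun v => G.edgeFinset.filter (fun e => v ∈ e) with h𝒜
  set A := W.biUnion 𝒜 with hA
  have hAE : A ⊆ G.edgeFinset := by
    intro e he
    obtain ⟨u, _, heu⟩ := Finset.mem_biUnion.mp he
    exact (Finset.mem_filter.mp heu).1
  rcases Finset.eq_empty_or_nonempty W with hW | ⟨w₀, hw₀⟩
  · subst hW
    have hAe : A = ∅ := by rw [hA, Finset.biUnion_empty]
    rw [hAe, rstar, Finset.sdiff_empty, KG_edgeFinset, ncc_eq_one_of_connected hG]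
    simp
  · set H := KG G (G.edgeFinset \ A) with hH
    have hiso : ∀ w ∈ W, ∀ z, ¬ H.Adj w z := by
      intro w hw z hadj
      rw [hH, KG, fromEdgeSet_adj] at hadj
      obtain ⟨⟨h1, h2⟩, _⟩ := hadj
      have h3 : s(w, z) ∈ G.edgeFinset \ A := by exact_mod_cast h1
      have h4 : s(w, z) ∈ A := Finset.mem_biUnion.mpr ⟨w, hw,
        Finset.mem_filter.mpr ⟨mem_edgeFinset.mpr h2, Sym2.mem_mk_left w z⟩⟩
      exact (Finset.mem_sdiff.mp h3).2 h4
    have hcollapse : ∀ w ∈ W, ∀ v, H.connectedComponentMk v = H.connectedComponentMk w → v = w :=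
      fun w hw v h => reach_isolated (hiso w hw) (ConnectedComponent.exact h)
    letI : Fintype H.ConnectedComponent := Fintype.ofFinite _
    set CompW : Finset H.ConnectedComponent := W.image H.connectedComponentMk with hCompW
    set CompO : Finset H.ConnectedComponent := Finset.univ \ CompW with hCompO
    -- vertices outside W map to CompO
    have hmaps : ∀ v, v ∉ W → H.connectedComponentMk v ∈ CompO := by
      intro v hv
      rw [hCompO, Finset.mem_sdiff]
      refine ⟨Finset.mem_univ _, fun hc => ?_⟩
      obtain ⟨w, hw, hweq⟩ := Finset.mem_image.mp hc
      exact hv ((hcollapse w hw v hweq.symm) ▸ hw)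
    -- each component in CompO has crossing weight ≥ 2
    have hper : ∀ Γ ∈ CompO, 2 ≤
        ∑ v ∈ (Finset.univ.filter (fun v => v ∉ W)).filter
          (fun v => H.connectedComponentMk v = Γ), degF A v := by
      intro Γ hΓ
      obtain ⟨u, hu⟩ := Γ.exists_rep
      have hΓW : ∀ w ∈ W, H.connectedComponentMk w ≠ Γ := by
        intro w hw hc
        rw [hCompO, Finset.mem_sdiff] at hΓ
        exact hΓ.2 (Finset.mem_image.mpr ⟨w, hw, hc⟩)
      set S : Set V := {v | H.connectedComponentMk v = Γ} with hS
      have huS : u ∈ S := hu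
      have hw₀S : w₀ ∉ S := fun hc => hΓW w₀ hw₀ hc
      obtain ⟨e₁, he₁E, e₂, he₂E, hne, ⟨a₁, b₁, he₁, ha₁, hb₁⟩, ⟨a₂, b₂, he₂, ha₂, hb₂⟩⟩ :=
        two_crossing_edges G hG hbridgeless huS hw₀S
      -- crossing edges are removed (in A) and their inner endpoints are in the fiber
      have hcross : ∀ (e : Sym2 V) (a b : V), e ∈ G.edgeFinset → e = s(a, b) → a ∈ S → b ∉ S →
          e ∈ A ∧ a ∈ (Finset.univ.filter (fun v => v ∉ W)).filter
            (fun v => H.connectedComponentMk v = Γ) ∧ a ∈ e := by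
        intro e a b heE heq haS hbS
        subst heq
        have hab : G.Adj a b := G.mem_edgeSet.mp (mem_edgeFinset.mp heE)
        have heA : s(a, b) ∈ A := by
          by_contra hc
          have hadj : H.Adj a b := by
            rw [hH, KG, fromEdgeSet_adj]
            refine ⟨⟨?_, hab⟩, G.ne_of_adj hab⟩
            have hmem : s(a, b) ∈ G.edgeFinset \ A := Finset.mem_sdiff.mpr ⟨heE, hc⟩
            exact_mod_cast hmem
          exact hbS (by
            rw [hS, Set.mem_setOf_eq, ← haS]
            exact (ConnectedComponent.sound hadj.reachable.symm : _))
        have haW : a ∉ W := by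
          intro hc
          exact hΓW a hc haS
        refine ⟨heA, Finset.mem_filter.mpr ⟨Finset.mem_filter.mpr ⟨Finset.mem_univ _, haW⟩, haS⟩,
          Sym2.mem_mk_left a b⟩
      obtain ⟨he₁A, ha₁T, ha₁e⟩ := hcross e₁ a₁ b₁ he₁E he₁ ha₁ hb₁
      obtain ⟨he₂A, ha₂T, ha₂e⟩ := hcross e₂ a₂ b₂ he₂E he₂ ha₂ hb₂
      set T := (Finset.univ.filter (fun v => v ∉ W)).filter
          (fun v => H.connectedComponentMk v = Γ) with hT
      by_cases haa : a₁ = a₂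
      · -- both edges incident to a₁
        have h2 : 2 ≤ degF A a₁ := by
          rw [degF]
          have hsub : ({e₁, e₂} : Finset (Sym2 V)) ⊆ A.filter (fun e => a₁ ∈ e) := by
            intro e he
            rcases Finset.mem_insert.mp he with rfl | he
            · exact Finset.mem_filter.mpr ⟨he₁A, ha₁e⟩
            · rw [Finset.mem_singleton.mp he]
              exact Finset.mem_filter.mpr ⟨he₂A, haa ▸ ha₂e⟩
          calc 2 = ({e₁, e₂} : Finset (Sym2 V)).card := (Finset.card_pair hne).symm
          _ ≤ _ := Finset.card_le_card hsub
        calc 2 ≤ degF A a₁ := h2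
        _ ≤ ∑ v ∈ T, degF A v :=
          Finset.single_le_sum (fun i _ => Nat.zero_le _) ha₁T
      · have hsub : ({a₁, a₂} : Finset V) ⊆ T := by
          intro a ha
          rcases Finset.mem_insert.mp ha with rfl | ha
          · exact ha₁T
          · rw [Finset.mem_singleton.mp ha]; exact ha₂T
        have h1 : 1 ≤ degF A a₁ := Finset.card_pos.mpr ⟨e₁, Finset.mem_filter.mpr ⟨he₁A, ha₁e⟩⟩
        have h2 : 1 ≤ degF A a₂ := Finset.card_pos.mpr ⟨e₂, Finset.mem_filter.mpr ⟨he₂A, ha₂e⟩⟩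
        calc 2 ≤ degF A a₁ + degF A a₂ := by omega
        _ = ∑ v ∈ ({a₁, a₂} : Finset V), degF A v := (Finset.sum_pair haa).symm
        _ ≤ ∑ v ∈ T, degF A v :=
          Finset.sum_le_sum_of_subset hsub
    -- sum over non-W vertices
    have hsplit : ∑ Γ ∈ CompO, ∑ v ∈ (Finset.univ.filter (fun v => v ∉ W)).filter
        (fun v => H.connectedComponentMk v = Γ), degF A v
        = ∑ v ∈ Finset.univ.filter (fun v => v ∉ W), degF A v := by
      apply Finset.sum_fiberwise_of_maps_to
      intro v hv
      exact hmaps v (Finset.mem_filter.mp hv).2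
    have hOsum : 2 * CompO.card ≤ ∑ v ∈ Finset.univ.filter (fun v => v ∉ W), degF A v := by
      rw [← hsplit]
      calc 2 * CompO.card = ∑ _Γ ∈ CompO, 2 := by rw [Finset.sum_const, smul_eq_mul, mul_comm]
      _ ≤ _ := Finset.sum_le_sum hper
    -- sum over W vertices
    have hWdeg : ∀ w ∈ W, degF A w = edeg G w := by
      intro w hw
      rw [← degF_edgeFinset G w, degF, degF]
      congr 1
      apply Finset.Subset.antisymm
      · exact Finset.filter_subset_filter _ hAE
      · intro e he
        obtain ⟨heE, hwe⟩ := Finset.mem_filter.mp he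
        exact Finset.mem_filter.mpr ⟨Finset.mem_biUnion.mpr ⟨w, hw,
          Finset.mem_filter.mpr ⟨heE, hwe⟩⟩, hwe⟩
    have hWsum : 4 * W.card ≤ ∑ v ∈ Finset.univ.filter (fun v => v ∈ W), degF A v := by
      have hWeq : Finset.univ.filter (fun v => v ∈ W) = W := by
        ext v; simp
      rw [hWeq]
      calc 4 * W.card = ∑ _v ∈ W, 4 := by rw [Finset.sum_const, smul_eq_mul, mul_comm]
      _ ≤ _ := Finset.sum_le_sum (fun w hw => by rw [hWdeg w hw]; exact hδ w)
    -- handshake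
    have hhand : ∑ v, degF A v = 2 * A.card := sum_degF G A hAE
    have htotal : ∑ v ∈ Finset.univ.filter (fun v => v ∈ W), degF A v +
        ∑ v ∈ Finset.univ.filter (fun v => v ∉ W), degF A v = 2 * A.card := by
      rw [Finset.sum_filter_add_sum_filter_not]
      exact hhand
    -- component count bound
    have hk : ncc H ≤ W.card + CompO.card := by
      have h1 : (Finset.univ : Finset H.ConnectedComponent) ⊆ CompW ∪ CompO := by
        intro Γ _
        rw [hCompO]
        by_cases h : Γ ∈ CompW
        · exact Finset.mem_union_left _ h
        · exact Finset.mem_union_right _ (Finset.mem_sdiff.mpr ⟨Finset.mem_univ _, h⟩)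
      calc ncc H = (Finset.univ : Finset H.ConnectedComponent).card := by
            rw [ncc, Nat.card_eq_fintype_card, Finset.card_univ]
      _ ≤ (CompW ∪ CompO).card := Finset.card_le_card h1
      _ ≤ CompW.card + CompO.card := Finset.card_union_le _ _
      _ ≤ W.card + CompO.card := by
            have himg : CompW.card ≤ W.card := by
              rw [hCompW]; exact Finset.card_image_le
            omega
    -- final arithmetic
    rw [rstar]
    have hcard : 2 * W.card + CompO.card ≤ A.card := by omega
    have hkk : ncc (KG G (G.edgeFinset \ A)) = ncc H := by rw [hH]
    rw [hkk]
    have hc1 : (ncc H : ℤ) ≤ W.card + CompO.card := by exact_mod_cast hk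
    have hc2 : 2 * (W.card : ℤ) + CompO.card ≤ A.card := by exact_mod_cast hcard
    omega

/-- Main structural lemma: a connected spanning subgraph whose complement covers `V`. -/
lemma exists_covering_connected (G : SimpleGraph V) (hG : G.Connected)
    (hbridgeless : ∀ e ∈ G.edgeSet, (G.deleteEdges {e}).Connected)
    (hδ : ∀ v, 4 ≤ edeg G v) :
    ∃ M : Finset (Sym2 V), ↑M ⊆ G.edgeSet ∧ (∀ v, ∃ e ∈ M, v ∈ e) ∧
      (G.deleteEdges ↑M).Connected := by
  classical
  obtain ⟨m, hm, hconn⟩ := rado G hG (fun v => G.edgeFinset.filter (fun e => v ∈ e))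
    (fun v => Finset.filter_subset _ _) (cond_check G hG hbridgeless hδ)
  refine ⟨Finset.univ.image m, ?_, ?_, hconn⟩
  · intro e he
    obtain ⟨v, _, hv⟩ := Finset.mem_image.mp (by exact_mod_cast he)
    rw [← hv]
    exact mem_edgeFinset.mp (Finset.filter_subset _ _ (hm v))
  · intro v
    exact ⟨m v, Finset.mem_image.mpr ⟨v, Finset.mem_univ v, rfl⟩,
      (Finset.mem_filter.mp (hm v)).2⟩
lemma card_symmDiff_modeq {α : Type*} [DecidableEq α] (A B : Finset α) :
    (A ∆ B).card ≡ A.card + B.card [MOD 2] := by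
  have h1 : A ∆ B = (A ∪ B) \ (A ∩ B) := symmDiff_eq_sup_sdiff_inf A B
  have h2 : (A ∪ B).card + (A ∩ B).card = A.card + B.card :=
    Finset.card_union_add_card_inter A B
  have h3 : ((A ∪ B) \ (A ∩ B)).card = (A ∪ B).card - (A ∩ B).card :=
    Finset.card_sdiff_of_subset (Finset.inter_subset_union)
  have h4 : (A ∩ B).card ≤ (A ∪ B).card := Finset.card_le_card Finset.inter_subset_union
  rw [h1, h3]
  unfold Nat.ModEq
  omega

lemma filter_symmDiff' {α : Type*} [DecidableEq α] (A B : Finset α) (p : α → Prop)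
    [DecidablePred p] :
    (A ∆ B).filter p = (A.filter p) ∆ (B.filter p) := by
  ext z
  simp only [Finset.mem_filter, Finset.mem_symmDiff]
  tauto

lemma degF_symmDiff (A B : Finset (Sym2 V)) (v : V) :
    degF (A ∆ B) v ≡ degF A v + degF B v [MOD 2] := by
  classical
  rw [degF, degF, degF, filter_symmDiff']
  exact card_symmDiff_modeq _ _

/-- The edge-toggle set of a walk. -/
noncomputable def tog {H : SimpleGraph V} : {u v : V} → H.Walk u v → Finset (Sym2 V)
  | _, _, Walk.nil => ∅
  | _, _, @Walk.cons _ _ u w _ _ p => {s(u, w)} ∆ tog p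

lemma tog_nil {H : SimpleGraph V} {u : V} : tog (Walk.nil : H.Walk u u) = ∅ := rfl

lemma tog_cons {H : SimpleGraph V} {u w v : V} (h : H.Adj u w) (p : H.Walk w v) :
    tog (Walk.cons h p) = {s(u, w)} ∆ tog p := rfl

lemma tog_subset {H : SimpleGraph V} {u v : V} (p : H.Walk u v) :
    ↑(tog p) ⊆ H.edgeSet := by
  induction p with
  | nil => simp [tog_nil]
  | @cons u w v h p ih =>
    rw [tog_cons]
    intro e he
    have : e ∈ ({s(u, w)} : Finset (Sym2 V)) ∆ tog p := by exact_mod_cast he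
    rw [Finset.mem_symmDiff] at this
    rcases this with ⟨h1, _⟩ | ⟨h1, _⟩
    · rw [Finset.mem_singleton.mp h1]
      exact h
    · exact ih (by exact_mod_cast h1)

lemma degF_singleton (e : Sym2 V) (z : V) :
    degF ({e} : Finset (Sym2 V)) z = if z ∈ e then 1 else 0 := by
  classical
  rw [degF]
  by_cases h : z ∈ e <;> simp [Finset.filter_singleton, h]

lemma degF_tog_parity {H : SimpleGraph V} {u v : V} (p : H.Walk u v) (z : V) :
    degF (tog p) z ≡ (if z = u then 1 else 0) + (if z = v then 1 else 0) [MOD 2] := by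
  induction p with
  | @nil u =>
    rw [tog_nil]
    have : degF (∅ : Finset (Sym2 V)) z = 0 := by rw [degF, Finset.filter_empty,
      Finset.card_empty]
    rw [this]
    unfold Nat.ModEq
    by_cases h : z = u <;> simp [h]
  | @cons u w v h p ih =>
    rw [tog_cons]
    have h1 := degF_symmDiff ({s(u, w)} : Finset (Sym2 V)) (tog p) z
    have h2 : degF ({s(u, w)} : Finset (Sym2 V)) z = if z ∈ s(u, w) then 1 else 0 :=
      degF_singleton _ _
    have h3 : (if z ∈ s(u, w) then 1 else 0) = (if z = u then 1 else 0) +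
        (if z = w then 1 else 0) := by
      have huw : u ≠ w := H.ne_of_adj h
      by_cases hu : z = u
      · subst hu; simp [Sym2.mem_iff, huw]
      · by_cases hw : z = w
        · subst hw; simp [Sym2.mem_iff, hu]
        · simp [Sym2.mem_iff, hu, hw]
    refine Nat.ModEq.trans h1 ?_
    rw [h2, h3]
    have h4 := ih
    unfold Nat.ModEq at h4 ⊢
    by_cases hu : z = u <;> by_cases hw : z = w <;> by_cases hv : z = v <;>
      simp [hu, hw, hv] at h4 ⊢ <;> omega

/-- Existence of `Y`-joins in connected graphs. -/
lemma exists_join (C : SimpleGraph V) (hC : C.Connected) (Y : Finset V) (hY : Even Y.card) :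
    ∃ K : Finset (Sym2 V), (↑K ⊆ C.edgeSet) ∧ ∀ z, (Odd (degF K z) ↔ z ∈ Y) := by
  classical
  generalize hn : Y.card = n
  induction n using Nat.strong_induction_on generalizing Y with
  | _ n ih =>
    rcases Finset.eq_empty_or_nonempty Y with hY0 | ⟨u, hu⟩
    · refine ⟨∅, by simp, fun z => ?_⟩
      subst hY0
      rw [degF, Finset.filter_empty, Finset.card_empty]
      simp
    · -- n = Y.card ≥ 2 since even and nonempty
      have hn2 : 2 ≤ n := by
        obtain ⟨k, hk⟩ := hn ▸ hY
        have : 0 < Y.card := Finset.card_pos.mpr ⟨u, hu⟩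
        omega
      have hY' : (Y.erase u).Nonempty := by
        rw [← Finset.card_pos, Finset.card_erase_of_mem hu]
        omega
      obtain ⟨v, hv⟩ := hY'
      have hvu : v ≠ u := Finset.ne_of_mem_erase hv
      have hvY : v ∈ Y := Finset.mem_of_mem_erase hv
      set Y'' := (Y.erase u).erase v with hY''
      have hcard'' : Y''.card = n - 2 := by
        rw [hY'', Finset.card_erase_of_mem hv, Finset.card_erase_of_mem hu, hn]
        omega
      have heven'' : Even Y''.card := by
        obtain ⟨k, hk⟩ := hn ▸ hY
        rw [hcard'']
        exact ⟨k - 1, by omega⟩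
      obtain ⟨K'', hK''C, hK''⟩ := ih (n - 2) (by omega) Y'' heven'' hcard''
      obtain ⟨p⟩ := hC.preconnected u v
      refine ⟨K'' ∆ tog p, ?_, ?_⟩
      · intro e he
        have : e ∈ K'' ∆ tog p := by exact_mod_cast he
        rw [Finset.mem_symmDiff] at this
        rcases this with ⟨h1, _⟩ | ⟨h1, _⟩
        · exact hK''C (by exact_mod_cast h1)
        · exact tog_subset p (by exact_mod_cast h1)
      · intro z
        have h1 := degF_symmDiff K'' (tog p) z
        have h2 := degF_tog_parity p z
        have hz'' := hK'' z
        have hYmem : z ∈ Y ↔ (z ∈ Y'' ∨ z = u ∨ z = v) := by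
          rw [hY'']
          constructor
          · intro hz
            by_cases h : z = u
            · exact Or.inr (Or.inl h)
            · by_cases h' : z = v
              · exact Or.inr (Or.inr h')
              · exact Or.inl (Finset.mem_erase.mpr ⟨h', Finset.mem_erase.mpr ⟨h, hz⟩⟩)
          · rintro (hz | rfl | rfl)
            · exact Finset.mem_of_mem_erase (Finset.mem_of_mem_erase hz)
            · exact hu
            · exact hvY
        have hzu'' : z = u → z ∉ Y'' := by
          rintro rfl
          rw [hY'']
          intro hc
          exact (Finset.mem_erase.mp (Finset.mem_of_mem_erase hc)).1 rfl
        have hzv'' : z = v → z ∉ Y'' := by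
          rintro rfl
          intro hc
          exact (Finset.mem_erase.mp hc).1 rfl
        rw [Nat.odd_iff] at hz'' ⊢
        unfold Nat.ModEq at h1 h2
        rw [hYmem]
        by_cases hzu : z = u <;> by_cases hzv : z = v
        · exact absurd (hzu.symm.trans hzv) (Ne.symm hvu)
        · have hnot := hzu'' hzu
          rw [if_pos hzu, if_neg hzv] at h2
          have hz2 : ¬ (degF K'' z % 2 = 1) := fun hc => hnot (hz''.mp hc)
          constructor
          · intro _; exact Or.inr (Or.inl hzu)
          · intro _; omega
        · have hnot := hzv'' hzv
          rw [if_neg hzu, if_pos hzv] at h2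
          have hz2 : ¬ (degF K'' z % 2 = 1) := fun hc => hnot (hz''.mp hc)
          constructor
          · intro _; exact Or.inr (Or.inr hzv)
          · intro _; omega
        · rw [if_neg hzu, if_neg hzv] at h2
          constructor
          · intro hodd
            refine Or.inl (hz''.mp ?_)
            omega
          · rintro (hz | rfl | rfl)
            · have := hz''.mpr hz
              omega
            · exact absurd rfl hzu
            · exact absurd rfl hzv
lemma edeg_deleteEdges_add (G : SimpleGraph V) (K : Finset (Sym2 V)) (hK : ↑K ⊆ G.edgeSet)
    (v : V) : edeg (G.deleteEdges ↑K) v + degF K v = edeg G v := by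
  classical
  letI : DecidableRel G.Adj := fun a b => Classical.dec _
  letI : DecidableRel (G.deleteEdges ↑K).Adj := fun a b => Classical.dec _
  set P := (G.neighborFinset v).filter (fun w => s(v, w) ∈ K) with hP
  have hPsub : P ⊆ G.neighborFinset v := Finset.filter_subset _ _
  have hnb : (G.deleteEdges ↑K).neighborFinset v = G.neighborFinset v \ P := by
    ext w
    rw [mem_neighborFinset, deleteEdges_adj, Finset.mem_sdiff, mem_neighborFinset, hP,
      Finset.mem_filter, mem_neighborFinset]
    constructor
    · rintro ⟨h1, h2⟩
      exact ⟨h1, fun hc => h2 (Finset.mem_coe.mpr hc.2)⟩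
    · rintro ⟨h1, h2⟩
      exact ⟨h1, fun hc => h2 ⟨h1, Finset.mem_coe.mp hc⟩⟩
  have hPcard : P.card = degF K v := by
    rw [degF]
    apply Finset.card_bij (fun w _ => s(v, w))
    · intro w hw
      rw [hP, Finset.mem_filter] at hw
      exact Finset.mem_filter.mpr ⟨hw.2, Sym2.mem_mk_left v w⟩
    · intro w1 hw1 w2 hw2 heq
      exact Sym2.congr_right.mp heq
    · intro e he
      rw [Finset.mem_filter] at he
      obtain ⟨w, rfl⟩ := Sym2.mem_iff_exists.mp he.2
      have hadj : G.Adj v w := G.mem_edgeSet.mp (hK (Finset.mem_coe.mpr he.1))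
      exact ⟨w, Finset.mem_filter.mpr ⟨by rw [mem_neighborFinset]; exact hadj, he.1⟩, rfl⟩
  have hdel : edeg (G.deleteEdges ↑K) v = ((G.deleteEdges ↑K).neighborFinset v).card := by
    rw [edeg_eq_degree_s8, degree]
  have hG : edeg G v = (G.neighborFinset v).card := by rw [edeg_eq_degree_s8, degree]
  rw [hdel, hG, hnb, Finset.card_sdiff_of_subset hPsub, hPcard]
  have := Finset.card_le_card hPsub
  rw [hPcard] at this
  omega

lemma degF_le_edeg (C : SimpleGraph V) (K : Finset (Sym2 V)) (hK : ↑K ⊆ C.edgeSet) (v : V) :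
    degF K v ≤ edeg C v := by
  classical
  rw [← degF_edgeFinset C v, degF, degF]
  apply Finset.card_le_card
  apply Finset.filter_subset_filter
  intro e he
  exact mem_edgeFinset.mpr (hK (Finset.mem_coe.mpr he))

theorem two_edge_connected_min_degree_four_strong_parity' (G : SimpleGraph V)
    (hG : G.Connected)
    (hbridgeless : ∀ e ∈ G.edgeSet, (G.deleteEdges {e}).Connected)
    (hδ : ∀ v, 4 ≤ edeg G v) :
    StrongParity G := by
  classical
  intro X hX
  obtain ⟨M, hME, hMcov, hMconn⟩ := exists_covering_connected G hG hbridgeless hδ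
  set C := G.deleteEdges ↑M with hCdef
  have hCle : C ≤ G := G.deleteEdges_le _
  letI : DecidableRel G.Adj := fun a b => Classical.dec _
  set Og := Finset.univ.filter (fun v => Odd (edeg G v)) with hOg
  have hOgeven : Even Og.card := by
    have h := G.even_card_odd_degree_vertices
    have heq : Og = Finset.univ.filter (fun v => Odd (G.degree v)) := by
      apply Finset.filter_congr
      intro v _
      rw [edeg_eq_degree_s8]
    rw [heq]
    convert h using 2
  set Y := X.toFinset ∆ Og with hY
  have hYeven : Even Y.card := by
    have h1 := card_symmDiff_modeq X.toFinset Og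
    have h2 : X.toFinset.card = X.ncard := (Set.ncard_eq_toFinset_card' X).symm
    rw [Nat.even_iff] at hOgeven hX ⊢
    unfold Nat.ModEq at h1
    rw [hY]
    omega
  obtain ⟨K, hKC, hKpar⟩ := exists_join C hMconn Y hYeven
  have hKG : ↑K ⊆ G.edgeSet := fun e he => edgeSet_mono hCle (hKC he)
  set H := G.deleteEdges ↑K with hH
  have hdeg : ∀ v, edeg H v + degF K v = edeg G v := fun v => edeg_deleteEdges_add G K hKG v
  have hlt : ∀ v, degF K v < edeg G v := by
    intro v
    have h1 : degF K v ≤ edeg C v := degF_le_edeg C K hKC v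
    have h2 : edeg C v < edeg G v := by
      obtain ⟨e, heM, hve⟩ := hMcov v
      obtain ⟨u, rfl⟩ := Sym2.mem_iff_exists.mp hve
      have hAdj : G.Adj v u := G.mem_edgeSet.mp (hME (Finset.mem_coe.mpr heM))
      have hnadj : ¬ C.Adj v u := by
        rw [hCdef, deleteEdges_adj]
        push_neg
        intro _
        exact Finset.mem_coe.mpr heM
      apply Set.ncard_lt_ncard
      · constructor
        · exact fun w hw => hCle hw
        · intro hsub
          exact hnadj (hsub hAdj)
      · exact Set.toFinite _
    omega
  refine ⟨H, ⟨G.deleteEdges_le _, fun v => by have := hdeg v; have := hlt v; omega⟩, ?_⟩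
  intro v
  have h1 := hdeg v
  have h2 := hKpar v
  have hYv : v ∈ Y ↔ ((v ∈ X ∧ ¬ Odd (edeg G v)) ∨ (Odd (edeg G v) ∧ v ∉ X)) := by
    rw [hY, Finset.mem_symmDiff]
    rw [hOg]
    simp only [Set.mem_toFinset, Finset.mem_filter, Finset.mem_univ, true_and]
  have h2' : (degF K v % 2 = 1) ↔
      ((v ∈ X ∧ ¬ edeg G v % 2 = 1) ∨ (edeg G v % 2 = 1 ∧ v ∉ X)) := by
    rw [← Nat.odd_iff, h2, hYv, Nat.odd_iff]
  rw [Nat.odd_iff]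
  by_cases hvX : v ∈ X <;> by_cases hc : edeg G v % 2 = 1
  · have hb : ¬ (degF K v % 2 = 1) := fun hbb => by
      rcases h2'.mp hbb with ⟨_, h⟩ | ⟨_, h⟩
      · exact h hc
      · exact h hvX
    refine ⟨fun _ => hvX, fun _ => ?_⟩
    omega
  · have hb : degF K v % 2 = 1 := h2'.mpr (Or.inl ⟨hvX, hc⟩)
    refine ⟨fun _ => hvX, fun _ => ?_⟩
    omega
  · have hb : degF K v % 2 = 1 := h2'.mpr (Or.inr ⟨hc, hvX⟩)
    constructor
    · intro ha; exfalso; omega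
    · intro hx; exact absurd hx hvX
  · have hb : ¬ (degF K v % 2 = 1) := fun hbb => by
      rcases h2'.mp hbb with ⟨h, _⟩ | ⟨h, _⟩
      · exact hvX h
      · exact hc h
    constructor
    · intro ha; exfalso; omega
    · intro hx; exact absurd hx hvX

end Aux

theorem two_edge_connected_min_degree_four_strong_parity {V : Type*} [Fintype V]
    (G : SimpleGraph V) (hG : G.Connected)
    (hbridgeless : ∀ e ∈ G.edgeSet, (G.deleteEdges {e}).Connected)
    (hδ : ∀ v, 4 ≤ edeg G v) :
    StrongParity G := by
  exact two_edge_connected_min_degree_four_strong_parity' G hG hbridgeless hδ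
end

section
/- If a tree T has an odd caterpillar factor H, then for every vertex v, deg_H(v) ≥ o_T(v), where o_T(v) is the number of odd components of T − v; in particular every vertex v with o_T(v) ≥ 3 has degree at least 3 in H. -/
open SimpleGraph

lemma edeg_eq_degree_s18 {W : Type*} [Fintype W] (G : SimpleGraph W) [DecidableRel G.Adj] (w : W) :
    edeg G w = G.degree w := by
  rw [edeg, degree, neighborFinset]
  exact Set.ncard_eq_toFinset_card' _

lemma degree_pos_of_connected {W : Type*} [Fintype W] (G : SimpleGraph W) [DecidableRel G.Adj]
    (hc : G.Connected) (he : G.edgeSet.Nonempty) (w : W) : 1 ≤ edeg G w := by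
  obtain ⟨e, hee⟩ := he
  induction e using Sym2.ind with
  | _ a b =>
    rw [mem_edgeSet] at hee
    rw [edeg_eq_degree_s18, ← card_neighborFinset_eq_degree, Nat.succ_le_iff, Finset.card_pos]
    obtain ⟨p⟩ := hc.preconnected w a
    cases p with
    | nil => exact ⟨b, by simpa using hee⟩
    | cons h q => exact ⟨_, by simpa using h⟩

lemma even_card_of_all_odd {W : Type*} [Fintype W] (G : SimpleGraph W) [DecidableRel G.Adj]
    (h : ∀ w, Odd (G.degree w)) : Even (Fintype.card W) := by
  have := G.even_card_odd_degree_vertices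
  rwa [Finset.filter_true_of_mem (fun w _ => h w), Finset.card_univ] at this

/-- A caterpillar: a connected acyclic graph with at least one edge in which
all vertices of degree at least 2 lie on a common path (the spine). -/
def IsCaterpillar {W : Type*} (H : SimpleGraph W) : Prop :=
  H.Connected ∧ H.IsAcyclic ∧ H.edgeSet.Nonempty ∧
    ∃ (u v : W) (p : H.Walk u v), p.IsPath ∧ ∀ w : W, 2 ≤ edeg H w → w ∈ p.support

/-- An odd caterpillar: a caterpillar in which every vertex of degree at least 2
has odd degree. -/
def IsOddCaterpillar {W : Type*} (H : SimpleGraph W) : Prop :=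
  IsCaterpillar H ∧ ∀ w : W, 2 ≤ edeg H w → Odd (edeg H w)

lemma even_ncard_supp {V : Type*} [Fintype V] (H : SimpleGraph V) (d : H.ConnectedComponent)
    (hcat : IsOddCaterpillar (SimpleGraph.induce d.supp H)) : Even d.supp.ncard := by
  classical
  haveI : Fintype ↥d.supp := Fintype.ofFinite _
  set G := SimpleGraph.induce d.supp H with hG
  have hodd : ∀ a : ↥d.supp, Odd (G.degree a) := by
    intro a
    have h1 : 1 ≤ edeg G a := degree_pos_of_connected G hcat.1.1 hcat.1.2.2.1 a
    rw [← edeg_eq_degree_s18]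
    rcases Nat.lt_or_ge (edeg G a) 2 with h | h
    · have : edeg G a = 1 := by omega
      rw [this]; exact odd_one
    · exact hcat.2 a h
  have := even_card_of_all_odd G hodd
  rwa [Set.ncard_eq_toFinset_card', Set.toFinset_card]

lemma mem_of_closed_reachable {V : Type*} {G : SimpleGraph V} {A : Set V}
    (hA : ∀ ⦃a b⦄, a ∈ A → G.Adj a b → b ∈ A) {w x : V} (h : G.Reachable w x) (hw : w ∈ A) :
    x ∈ A := by
  obtain ⟨p⟩ := h
  induction p with
  | nil => exact hw
  | cons h q ih => exact ih (hA hw h)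

/-- An odd caterpillar factor of `T`: a spanning subgraph each of whose connected
components is an odd caterpillar. -/
def IsOddCaterpillarFactor {V : Type*} (T H : SimpleGraph V) : Prop :=
  H ≤ T ∧ ∀ c : H.ConnectedComponent, IsOddCaterpillar (SimpleGraph.induce c.supp H)

/-- The oddness of `v` in `T`: the number of odd-order components of `T - v`. -/
noncomputable def oddness {V : Type*} (T : SimpleGraph V) (v : V) : ℕ :=
  {c : (SimpleGraph.induce {w : V | w ≠ v} T).ConnectedComponent | Odd c.supp.ncard}.ncard

theorem odd_caterpillar_factor_degree_ge_oddness {V : Type*} [Fintype V]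
    (T : SimpleGraph V) (hT : T.IsTree)
    (H : SimpleGraph V) (hH : IsOddCaterpillarFactor T H) :
    ∀ v : V, oddness T v ≤ edeg H v := by
  classical
  obtain ⟨hle, hfac⟩ := hH
  intro v
  have key : ∀ c : (SimpleGraph.induce {w : V | w ≠ v} T).ConnectedComponent,
      Odd c.supp.ncard →
      ∃ u, u ∈ H.neighborSet v ∧ ∃ h : u ≠ v, (⟨u, h⟩ : {w : V | w ≠ v}) ∈ c.supp := by
    intro c hc
    by_contra hno
    push_neg at hno
    rw [← Nat.not_even_iff_odd] at hc
    apply hc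
    set A : Set V := Subtype.val '' c.supp with hA
    have hcard : c.supp.ncard = A.ncard :=
      (Set.ncard_image_of_injective _ Subtype.val_injective).symm
    have hclosed : ∀ ⦃a b⦄, a ∈ A → H.Adj a b → b ∈ A := by
      rintro a b ⟨⟨a', ha'⟩, hmem, rfl⟩ hadj
      have hbv : b ≠ v := by
        rintro rfl
        exact hno _ hadj.symm ha' hmem
      have hadj' : (SimpleGraph.induce {w : V | w ≠ v} T).Adj ⟨a', ha'⟩ ⟨b, hbv⟩ := by
        exact hle hadj
      refine ⟨⟨b, hbv⟩, ?_, rfl⟩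
      have := (SimpleGraph.ConnectedComponent.mem_supp_iff _ _).mp hmem
      rw [SimpleGraph.ConnectedComponent.mem_supp_iff, ← this]
      exact (SimpleGraph.ConnectedComponent.sound hadj'.reachable.symm)
    have hcomp : ∀ ⦃w⦄, w ∈ A → (H.connectedComponentMk w).supp ⊆ A := by
      intro w hw x hx
      rw [SimpleGraph.ConnectedComponent.mem_supp_iff, SimpleGraph.ConnectedComponent.eq] at hx
      exact mem_of_closed_reachable hclosed hx.symm hw
    rw [hcard, Set.ncard_eq_toFinset_card']
    rw [Finset.card_eq_sum_card_fiberwise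
      (f := H.connectedComponentMk) (t := A.toFinset.image H.connectedComponentMk)
      (fun x hx => Finset.mem_image_of_mem _ hx)]
    refine Finset.sum_induction _ Even (fun a b => Even.add) Even.zero ?_
    intro d hd
    obtain ⟨w, hw, hwd⟩ := Finset.mem_image.mp hd
    rw [Set.mem_toFinset] at hw
    have hfil : A.toFinset.filter (fun x => H.connectedComponentMk x = d) = d.supp.toFinset := by
      ext x
      simp only [Finset.mem_filter, Set.mem_toFinset,
        SimpleGraph.ConnectedComponent.mem_supp_iff]
      constructor
      · exact fun h => h.2
      · intro h
        refine ⟨?_, h⟩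
        apply hcomp hw
        rw [SimpleGraph.ConnectedComponent.mem_supp_iff, hwd, h]
    rw [hfil, ← Set.ncard_eq_toFinset_card']
    exact even_ncard_supp H d (hfac d)
  haveI : Nonempty V := ⟨v⟩
  choose! f hf1 hf2 using key
  have hinj : Set.InjOn f {c | Odd c.supp.ncard} := by
    intro c1 h1 c2 h2 heq
    obtain ⟨hne1, hm1⟩ := hf2 c1 h1
    obtain ⟨hne2, hm2⟩ := hf2 c2 h2
    rw [SimpleGraph.ConnectedComponent.mem_supp_iff] at hm1 hm2
    rw [← hm1, ← hm2]
    exact congrArg _ (Subtype.ext heq)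
  calc oddness T v = (f '' {c | Odd c.supp.ncard}).ncard :=
        (Set.ncard_image_of_injOn hinj).symm
    _ ≤ (H.neighborSet v).ncard := by
        refine Set.ncard_le_ncard ?_ (Set.toFinite _)
        rintro _ ⟨c, hc, rfl⟩
        exact hf1 c hc
    _ = edeg H v := rfl
end
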